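/- (Newton identities for the RTT-algebra, symmetric version.) For every integer j ≥ 1 one has the identity in the RTT-algebra: q^{j} j_q τ_j(T) = Σ_{k=1}^{j−1} τ_{j−k}(T) s_k(T) + s_j(T). -/

import Mathlib

open Finset

/-- Operators on `V^{⊗ m}` where `V = F^N`, represented as matrices indexed by
multi-indices `Fin m → Fin N`. -/
abbrev TensM (R : Type*) (N m : ℕ) := Matrix (Fin m → Fin N) (Fin m → Fin N) R

/-- Operators on `V ⊗ V`, i.e. `N² × N²` matrices. -/
abbrev RMat (R : Type*) (N : ℕ) := Matrix (Fin N × Fin N) (Fin N × Fin N) R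

/-- The `q`-number `k_q = (q^k - q^{-k})/(q - q^{-1})`. -/
noncomputable def qnum {F : Type*} [Field F] (q : F) (k : ℕ) : F :=
  (q ^ k - q⁻¹ ^ k) / (q - q⁻¹)

/-- Place an `N × N` matrix on the tensor leg number `i` (0-based) of `V^{⊗ m}`,
acting as the identity on all other legs. -/
def place1 {R : Type*} [Zero R] {N m : ℕ} (i : ℕ) (M : Matrix (Fin N) (Fin N) R) :
    TensM R N m :=
  Matrix.of fun a b =>
    if h : i < m then
      if ∀ t : Fin m, t.val ≠ i → a t = b t then M (a ⟨i, h⟩) (b ⟨i, h⟩) else 0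
    else 0

/-- Place an operator on `V ⊗ V` on the (0-based) tensor legs `i, i+1` of `V^{⊗ m}`,
acting as the identity on all other legs.  (So the paper's `R̂_i`, `1`-based, is
`place2 (i-1)`.) -/
def place2 {R : Type*} [Zero R] {N m : ℕ} (i : ℕ) (M : RMat R N) :
    TensM R N m :=
  Matrix.of fun a b =>
    if h : i + 1 < m then
      if ∀ t : Fin m, t.val ≠ i → t.val ≠ i + 1 → a t = b t then
        M (a ⟨i, by omega⟩, a ⟨i + 1, h⟩) (b ⟨i, by omega⟩, b ⟨i + 1, h⟩)
      else 0
    else 0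

/-- Embed an operator on `V^{⊗ k}` into `V^{⊗ m}` (`k ≤ m`), acting on the first `k`
tensor legs and as the identity on the remaining legs. -/
def embed {R : Type*} [Zero R] {N : ℕ} (m : ℕ) {k : ℕ} (M : TensM R N k) :
    TensM R N m :=
  Matrix.of fun a b =>
    if h : k ≤ m then
      if ∀ t : Fin m, k ≤ t.val → a t = b t then
        M (fun s => a ⟨s.val, lt_of_lt_of_le s.isLt h⟩)
          (fun s => b ⟨s.val, lt_of_lt_of_le s.isLt h⟩)
      else 0
    else 0

/-- The braid form of the Yang--Baxter equation `R̂₁ R̂₂ R̂₁ = R̂₂ R̂₁ R̂₂` on `V^{⊗3}`. -/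
def YangBaxter {F : Type*} [Field F] {N : ℕ} (Rh : RMat F N) : Prop :=
  (place2 0 Rh : TensM F N 3) * place2 1 Rh * place2 0 Rh =
    place2 1 Rh * place2 0 Rh * place2 1 Rh

/-- The Hecke condition `R̂² = I + (q - q⁻¹) R̂`. -/
def Hecke {F : Type*} [Field F] {N : ℕ} (q : F) (Rh : RMat F N) : Prop :=
  Rh * Rh = 1 + (q - q⁻¹) • Rh

/-- The `q`-antisymmetrizers `A^{(k)}`, defined inductively by `A^{(1)} = I` and
`A^{(k)} = (1/k_q) A^{(k-1)} (q^{k-1} - (k-1)_q R̂_{k-1}) A^{(k-1)}`. -/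
noncomputable def antis {F : Type*} [Field F] {N : ℕ} (Rh : RMat F N) (q : F) :
    (k : ℕ) → TensM F N k
  | 0 => 1
  | 1 => 1
  | k + 2 =>
      (qnum q (k + 2))⁻¹ •
        (embed (k + 2) (antis Rh q (k + 1)) *
          (q ^ (k + 1) • (1 : TensM F N (k + 2)) - qnum q (k + 1) • place2 k Rh) *
          embed (k + 2) (antis Rh q (k + 1)))

/-- The `q`-symmetrizers `S^{(k)}`, defined inductively by `S^{(1)} = I` and
`S^{(k)} = (1/k_q) S^{(k-1)} (q^{1-k} + (k-1)_q R̂_{k-1}) S^{(k-1)}`. -/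
noncomputable def syms {F : Type*} [Field F] {N : ℕ} (Rh : RMat F N) (q : F) :
    (k : ℕ) → TensM F N k
  | 0 => 1
  | 1 => 1
  | k + 2 =>
      (qnum q (k + 2))⁻¹ •
        (embed (k + 2) (syms Rh q (k + 1)) *
          (q⁻¹ ^ (k + 1) • (1 : TensM F N (k + 2)) + qnum q (k + 1) • place2 k Rh) *
          embed (k + 2) (syms Rh q (k + 1)))

/-- Partial trace over all tensor legs except the last one. -/
def trAllButLast {R : Type*} [AddCommMonoid R] {N : ℕ} :
    {m : ℕ} → TensM R N m → Matrix (Fin N) (Fin N) R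
  | 0, _ => 0
  | m + 1, M => Matrix.of fun x y => ∑ a : Fin m → Fin N, M (Fin.snoc a x) (Fin.snoc a y)

/-- Partial trace over all tensor legs except the first one. -/
def trAllButFirst {R : Type*} [AddCommMonoid R] {N : ℕ} :
    {m : ℕ} → TensM R N m → Matrix (Fin N) (Fin N) R
  | 0, _ => 0
  | m + 1, M => Matrix.of fun x y => ∑ a : Fin m → Fin N, M (Fin.cons x a) (Fin.cons y a)

/-- Extension of scalars `F → 𝒜` applied entrywise (scalar entries are central in `𝒜`). -/
def lift {F : Type*} [Field F] (𝒜 : Type*) [Ring 𝒜] [Algebra F 𝒜] {N m : ℕ}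
    (M : TensM F N m) : TensM 𝒜 N m := M.map (algebraMap F 𝒜)

/-- The product `R̂_{i+1} R̂_{i+2} ⋯ R̂_{i+l}` (1-based paper numbering), i.e. the product of
copies of `R̂` placed at 0-based positions `i, i+1, …, i+l-1` of `V^{⊗ m}`. -/
noncomputable def rChainFrom {F : Type*} [Field F] {N : ℕ} (m : ℕ) (Rh : RMat F N)
    (i : ℕ) : ℕ → TensM F N m
  | 0 => 1
  | l + 1 => rChainFrom m Rh i l * place2 (i + l) Rh

/-- The product `R̂₁ R̂₂ ⋯ R̂_l` (1-based paper numbering) on `V^{⊗ m}`. -/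
noncomputable def rChain {F : Type*} [Field F] {N : ℕ} (m : ℕ) (Rh : RMat F N)
    (l : ℕ) : TensM F N m := rChainFrom m Rh 0 l

/-- The product `T₁ T₂ ⋯ T_k` of copies of the quantum matrix `T` on `V^{⊗ m}`. -/
def Tprod {𝒜 : Type*} [Ring 𝒜] {N : ℕ} (m : ℕ) (T : Matrix (Fin N) (Fin N) 𝒜) :
    ℕ → TensM 𝒜 N m
  | 0 => 1
  | k + 1 => Tprod m T k * place1 k T

/-- The matrix `T₁T₂` on `V ⊗ V`, `(T₁T₂)^{ij}_{kl} = T^i_k T^j_l`. -/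
def TT {𝒜 : Type*} [Mul 𝒜] {N : ℕ} (T : Matrix (Fin N) (Fin N) 𝒜) : RMat 𝒜 N :=
  Matrix.of fun p r => T p.1 r.1 * T p.2 r.2

/-- The RTT relation `R̂ T₁T₂ = T₁T₂ R̂` (entries of `R̂` are central scalars). -/
def RTTrel {F : Type*} [Field F] {N : ℕ} (𝒜 : Type*) [Ring 𝒜] [Algebra F 𝒜]
    (Rh : RMat F N) (T : Matrix (Fin N) (Fin N) 𝒜) : Prop :=
  Rh.map (algebraMap F 𝒜) * TT T = TT T * Rh.map (algebraMap F 𝒜)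

/-- The `k`-th underlined power `T^{⟨k⟩} = Tr_{(1…k-1)} (R̂₁ ⋯ R̂_{k-1} T₁ ⋯ T_k)`. -/
noncomputable def underPow {F : Type*} [Field F] (𝒜 : Type*) [Ring 𝒜] [Algebra F 𝒜]
    {N : ℕ} (Rh : RMat F N) (T : Matrix (Fin N) (Fin N) 𝒜) :
    ℕ → Matrix (Fin N) (Fin N) 𝒜
  | 0 => 1
  | k + 1 => trAllButLast (lift 𝒜 (rChain (k + 1) Rh k) * Tprod (k + 1) T (k + 1))

/-- The `k`-th overlined power `T^{[k]} = Tr_{(2…k)} (R̂₁ ⋯ R̂_{k-1} T₁ ⋯ T_k)`. -/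
noncomputable def overPow {F : Type*} [Field F] (𝒜 : Type*) [Ring 𝒜] [Algebra F 𝒜]
    {N : ℕ} (Rh : RMat F N) (T : Matrix (Fin N) (Fin N) 𝒜) :
    ℕ → Matrix (Fin N) (Fin N) 𝒜
  | 0 => 1
  | k + 1 => trAllButFirst (lift 𝒜 (rChain (k + 1) Rh k) * Tprod (k + 1) T (k + 1))

/-- The `k`-th right wedge power `T^{∧k,r} = Tr_{(1…k-1)} (A^{(k)} T₁ ⋯ T_k)`. -/
noncomputable def wedgeR {F : Type*} [Field F] (𝒜 : Type*) [Ring 𝒜] [Algebra F 𝒜]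
    {N : ℕ} (Rh : RMat F N) (q : F) (T : Matrix (Fin N) (Fin N) 𝒜) :
    ℕ → Matrix (Fin N) (Fin N) 𝒜
  | 0 => 1
  | k + 1 => trAllButLast (lift 𝒜 (antis Rh q (k + 1)) * Tprod (k + 1) T (k + 1))

/-- The `k`-th left wedge power `T^{∧k,l} = Tr_{(2…k)} (A^{(k)} T₁ ⋯ T_k)`. -/
noncomputable def wedgeL {F : Type*} [Field F] (𝒜 : Type*) [Ring 𝒜] [Algebra F 𝒜]
    {N : ℕ} (Rh : RMat F N) (q : F) (T : Matrix (Fin N) (Fin N) 𝒜) :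
    ℕ → Matrix (Fin N) (Fin N) 𝒜
  | 0 => 1
  | k + 1 => trAllButFirst (lift 𝒜 (antis Rh q (k + 1)) * Tprod (k + 1) T (k + 1))

/-- The `k`-th right symmetric power `T^{Sk,r} = Tr_{(1…k-1)} (S^{(k)} T₁ ⋯ T_k)`. -/
noncomputable def sPowR {F : Type*} [Field F] (𝒜 : Type*) [Ring 𝒜] [Algebra F 𝒜]
    {N : ℕ} (Rh : RMat F N) (q : F) (T : Matrix (Fin N) (Fin N) 𝒜) :
    ℕ → Matrix (Fin N) (Fin N) 𝒜
  | 0 => 1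
  | k + 1 => trAllButLast (lift 𝒜 (syms Rh q (k + 1)) * Tprod (k + 1) T (k + 1))

/-- The `k`-th left symmetric power `T^{Sk,l} = Tr_{(2…k)} (S^{(k)} T₁ ⋯ T_k)`. -/
noncomputable def sPowL {F : Type*} [Field F] (𝒜 : Type*) [Ring 𝒜] [Algebra F 𝒜]
    {N : ℕ} (Rh : RMat F N) (q : F) (T : Matrix (Fin N) (Fin N) 𝒜) :
    ℕ → Matrix (Fin N) (Fin N) 𝒜
  | 0 => 1
  | k + 1 => trAllButFirst (lift 𝒜 (syms Rh q (k + 1)) * Tprod (k + 1) T (k + 1))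

/-- The elementary symmetric functions `σ_k(T) = q^k Tr_{(1…k)} (A^{(k)} T₁ ⋯ T_k)`
(with `σ₀(T) = 1`). -/
noncomputable def sigmaT {F : Type*} [Field F] (𝒜 : Type*) [Ring 𝒜] [Algebra F 𝒜]
    {N : ℕ} (Rh : RMat F N) (q : F) (T : Matrix (Fin N) (Fin N) 𝒜) (k : ℕ) : 𝒜 :=
  q ^ k • Matrix.trace (lift 𝒜 (antis Rh q k) * Tprod k T k)

/-- The complete symmetric functions `τ_k(T) = q^{-k} Tr_{(1…k)} (S^{(k)} T₁ ⋯ T_k)`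
(with `τ₀(T) = 1`). -/
noncomputable def tauT {F : Type*} [Field F] (𝒜 : Type*) [Ring 𝒜] [Algebra F 𝒜]
    {N : ℕ} (Rh : RMat F N) (q : F) (T : Matrix (Fin N) (Fin N) 𝒜) (k : ℕ) : 𝒜 :=
  q⁻¹ ^ k • Matrix.trace (lift 𝒜 (syms Rh q k) * Tprod k T k)

/-- The `q`-power sums `s_k(T) = Tr_{(1…k)} (R̂₁ ⋯ R̂_{k-1} T₁ ⋯ T_k)` (with `s₀(T) = 1`). -/
noncomputable def psum {F : Type*} [Field F] (𝒜 : Type*) [Ring 𝒜] [Algebra F 𝒜]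
    {N : ℕ} (Rh : RMat F N) (T : Matrix (Fin N) (Fin N) 𝒜) (k : ℕ) : 𝒜 :=
  Matrix.trace (lift 𝒜 (rChain k Rh (k - 1)) * Tprod k T k)

/-- `D_ℓ = (n_q / q^n) Tr_{(1…n-1)} A^{(n)}`. -/
noncomputable def Dleft {F : Type*} [Field F] {N : ℕ} (Rh : RMat F N) (q : F) (n : ℕ) :
    Matrix (Fin N) (Fin N) F :=
  (qnum q n / q ^ n) • trAllButLast (antis Rh q n)

/-- `D_r = (n_q / q^n) Tr_{(2…n)} A^{(n)}`. -/
noncomputable def Dright {F : Type*} [Field F] {N : ℕ} (Rh : RMat F N) (q : F) (n : ℕ) :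
    Matrix (Fin N) (Fin N) F :=
  (qnum q n / q ^ n) • trAllButFirst (antis Rh q n)

/-- The Reflection equation `R̂ L₁ R̂ L₁ = L₁ R̂ L₁ R̂` on `V ⊗ V`. -/
def RErel {F : Type*} [Field F] {N : ℕ} (𝒜 : Type*) [Ring 𝒜] [Algebra F 𝒜]
    (Rh : RMat F N) (L : Matrix (Fin N) (Fin N) 𝒜) : Prop :=
  lift 𝒜 (place2 0 Rh : TensM F N 2) * place1 0 L * lift 𝒜 (place2 0 Rh) * place1 0 L =
    place1 0 L * lift 𝒜 (place2 0 Rh) * place1 0 L * lift 𝒜 (place2 0 Rh)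

/-- `L_{k̄}` (0-based: `Lbar … 0 = L₁`, `Lbar … k = R̂_k (Lbar … (k-1)) R̂_k⁻¹`). -/
noncomputable def Lbar {F : Type*} [Field F] (𝒜 : Type*) [Ring 𝒜] [Algebra F 𝒜]
    {N : ℕ} (Rh : RMat F N) (m : ℕ) (L : Matrix (Fin N) (Fin N) 𝒜) :
    ℕ → TensM 𝒜 N m
  | 0 => place1 0 L
  | k + 1 => lift 𝒜 (place2 k Rh) * Lbar 𝒜 Rh m L k * lift 𝒜 (place2 k Rh⁻¹)

/-- The product `L_{1̄} L_{2̄} ⋯ L_{k̄}` on `V^{⊗ m}`. -/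
noncomputable def LbarProd {F : Type*} [Field F] (𝒜 : Type*) [Ring 𝒜] [Algebra F 𝒜]
    {N : ℕ} (Rh : RMat F N) (m : ℕ) (L : Matrix (Fin N) (Fin N) 𝒜) :
    ℕ → TensM 𝒜 N m
  | 0 => 1
  | k + 1 => LbarProd 𝒜 Rh m L k * Lbar 𝒜 Rh m L k

/-- Insertion of a copy of `D` on every tensor leg of `V^{⊗(m+1)}` except the first one. -/
def Dbig {F : Type*} [Field F] {N : ℕ} (D : Matrix (Fin N) (Fin N) F) (m : ℕ) :
    TensM F N (m + 1) :=
  Matrix.of fun a b =>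
    (if a 0 = b 0 then (1 : F) else 0) * ∏ t : Fin m, D (a t.succ) (b t.succ)

/-- `L^{∧k} = Tr_{q (2…k)} (A^{(k)} L_{1̄} ⋯ L_{k̄})`, the `q`-trace over the legs `2…k`,
with a copy of `D` inserted in each traced leg. -/
noncomputable def LwedgeRE {F : Type*} [Field F] (𝒜 : Type*) [Ring 𝒜] [Algebra F 𝒜]
    {N : ℕ} (Rh : RMat F N) (q : F) (D : Matrix (Fin N) (Fin N) F)
    (L : Matrix (Fin N) (Fin N) 𝒜) : ℕ → Matrix (Fin N) (Fin N) 𝒜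
  | 0 => 1
  | k + 1 => trAllButFirst
      (lift 𝒜 (antis Rh q (k + 1)) * LbarProd 𝒜 Rh (k + 1) L (k + 1) * lift 𝒜 (Dbig D k))

/-- `L^{Sk} = Tr_{q (2…k)} (S^{(k)} L_{1̄} ⋯ L_{k̄})`. -/
noncomputable def LsymRE {F : Type*} [Field F] (𝒜 : Type*) [Ring 𝒜] [Algebra F 𝒜]
    {N : ℕ} (Rh : RMat F N) (q : F) (D : Matrix (Fin N) (Fin N) F)
    (L : Matrix (Fin N) (Fin N) 𝒜) : ℕ → Matrix (Fin N) (Fin N) 𝒜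
  | 0 => 1
  | k + 1 => trAllButFirst
      (lift 𝒜 (syms Rh q (k + 1)) * LbarProd 𝒜 Rh (k + 1) L (k + 1) * lift 𝒜 (Dbig D k))

/-- `σ_k(L) = q^k Tr_q (L^{∧k})`, with `σ₀(L) = 1`;  `Tr_q X = Tr (D_r X)`. -/
noncomputable def sigmaRE {F : Type*} [Field F] (𝒜 : Type*) [Ring 𝒜] [Algebra F 𝒜]
    {N : ℕ} (Rh : RMat F N) (q : F) (D : Matrix (Fin N) (Fin N) F)
    (L : Matrix (Fin N) (Fin N) 𝒜) : ℕ → 𝒜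
  | 0 => 1
  | k + 1 => q ^ (k + 1) •
      Matrix.trace (D.map (algebraMap F 𝒜) * LwedgeRE 𝒜 Rh q D L (k + 1))

/-- `τ_k(L) = q^{-k} Tr_q (L^{Sk})`, with `τ₀(L) = 1`. -/
noncomputable def tauRE {F : Type*} [Field F] (𝒜 : Type*) [Ring 𝒜] [Algebra F 𝒜]
    {N : ℕ} (Rh : RMat F N) (q : F) (D : Matrix (Fin N) (Fin N) F)
    (L : Matrix (Fin N) (Fin N) 𝒜) : ℕ → 𝒜
  | 0 => 1
  | k + 1 => q⁻¹ ^ (k + 1) •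
      Matrix.trace (D.map (algebraMap F 𝒜) * LsymRE 𝒜 Rh q D L (k + 1))

section NewtonAux

open Matrix

variable {R : Type*} {N : ℕ}

/-- Generic placement of an operator on `k` consecutive legs starting at leg `i`. -/
def pg [Zero R] (m : ℕ) (i : ℕ) {k : ℕ} (M : TensM R N k) : TensM R N m :=
  Matrix.of fun a b =>
    if h : i + k ≤ m then
      if ∀ t : Fin m, (t.val < i ∨ i + k ≤ t.val) → a t = b t then
        M (fun s => a ⟨i + s.val, by omega⟩) (fun s => b ⟨i + s.val, by omega⟩)
      else 0
    else 0

theorem pg_apply [Zero R] {m i k : ℕ} (h : i + k ≤ m) (M : TensM R N k)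
    (a b : Fin m → Fin N) :
    pg m i M a b =
      if ∀ t : Fin m, (t.val < i ∨ i + k ≤ t.val) → a t = b t then
        M (fun s => a ⟨i + s.val, by omega⟩) (fun s => b ⟨i + s.val, by omega⟩)
      else 0 := by
  simp [pg, h]

theorem pg_smul {S : Type*} [Zero R] [SMulZeroClass S R] (m i : ℕ) {k : ℕ}
    (c : S) (M : TensM R N k) : pg m i (c • M) = c • pg m i M := by
  ext a b
  simp only [pg, Matrix.of_apply, Matrix.smul_apply]
  split_ifs <;> simp

theorem pg_add [AddMonoid R] (m i : ℕ) {k : ℕ} (A B : TensM R N k) :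
    pg m i (A + B) = pg m i A + pg m i B := by
  ext a b
  simp only [pg, Matrix.of_apply, Matrix.add_apply]
  split_ifs <;> simp

theorem pg_map {S : Type*} [Zero R] [Zero S] (m i : ℕ) {k : ℕ} (f : R → S)
    (hf : f 0 = 0) (M : TensM R N k) : pg m i (M.map f) = (pg m i M).map f := by
  ext a b
  simp only [pg, Matrix.of_apply, Matrix.map_apply]
  split_ifs <;> simp [hf]

theorem pg_one [NonAssocSemiring R] {m i k : ℕ} (h : i + k ≤ m) :
    pg m i (1 : TensM R N k) = 1 := by
  ext a b
  rw [pg_apply h]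
  by_cases hab : a = b
  · subst hab
    simp [Matrix.one_apply]
  · have : ¬ ((∀ t : Fin m, (t.val < i ∨ i + k ≤ t.val) → a t = b t) ∧
        (fun s : Fin k => a ⟨i + s.val, by omega⟩) = (fun s : Fin k => b ⟨i + s.val, by omega⟩)) := by
      intro ⟨h1, h2⟩
      apply hab
      funext t
      by_cases ht : t.val < i ∨ i + k ≤ t.val
      · exact h1 t ht
      · have ht2 : i ≤ t.val ∧ t.val < i + k := by omega
        have := congrFun h2 ⟨t.val - i, by omega⟩
        simpa [Fin.ext_iff, show i + (t.val - i) = t.val by omega] using this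
    rw [Matrix.one_apply_ne hab]
    split_ifs with h1
    · rw [Matrix.one_apply]
      split_ifs with h2
      · exact absurd ⟨h1, h2⟩ this
      · rfl
    · rfl

theorem pg_mul [NonAssocSemiring R] [Fintype (Fin N)] {m i k : ℕ} (h : i + k ≤ m)
    (A B : TensM R N k) : pg m i (A * B) = pg m i A * pg m i B := by
  ext a b
  rw [Matrix.mul_apply]
  -- the injection from window configurations
  set g : (Fin k → Fin N) → (Fin m → Fin N) := fun w t =>
    if ht : i ≤ t.val ∧ t.val < i + k then w ⟨t.val - i, by omega⟩ else a t with hg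
  have hginj : Function.Injective g := by
    intro w w' hww
    funext s
    have := congrFun hww ⟨i + s.val, by omega⟩
    simpa [hg, Fin.ext_iff, show i ≤ i + s.val ∧ i + s.val < i + k by omega] using this
  have hsupp : ∀ c : Fin m → Fin N, c ∉ Finset.univ.image g →
      pg m i A a c * pg m i B c b = 0 := by
    intro c hc
    have : ¬ ∀ t : Fin m, (t.val < i ∨ i + k ≤ t.val) → a t = c t := by
      intro hcond
      apply hc
      refine Finset.mem_image.2 ⟨fun s => c ⟨i + s.val, by omega⟩, Finset.mem_univ _, ?_⟩
      funext t
      simp only [hg]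
      split_ifs with ht
      · congr 1
        simp [Fin.ext_iff]; omega
      · exact hcond t (by omega)
    rw [pg_apply h, if_neg this, zero_mul]
  rw [Finset.sum_subset (Finset.subset_univ _) (fun c _ hc => hsupp c hc) |>.symm,
    Finset.sum_image (fun x _ y _ hxy => hginj hxy)]
  have hgw : ∀ w : Fin k → Fin N,
      pg m i A a (g w) * pg m i B (g w) b =
        (if ∀ t : Fin m, (t.val < i ∨ i + k ≤ t.val) → a t = b t then
          A (fun s => a ⟨i + s.val, by omega⟩) w * B w (fun s => b ⟨i + s.val, by omega⟩)
        else 0) := by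
    intro w
    have hgout : ∀ t : Fin m, (t.val < i ∨ i + k ≤ t.val) → g w t = a t := by
      intro t ht
      simp only [hg]
      rw [dif_neg (by omega)]
    have hgin : (fun s : Fin k => g w ⟨i + s.val, by omega⟩) = w := by
      funext s
      simp only [hg]
      rw [dif_pos (by omega)]
      congr 1
      simp [Fin.ext_iff]
    rw [pg_apply h, pg_apply h, if_pos (fun t ht => (hgout t ht).symm), hgin]
    by_cases hab : ∀ t : Fin m, (t.val < i ∨ i + k ≤ t.val) → a t = b t
    · rw [if_pos hab, if_pos (fun t ht => (hgout t ht).trans (hab t ht))]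
    · rw [if_neg hab, if_neg (fun hc => hab (fun t ht => (hgout t ht).symm.trans (hc t ht))),
        mul_zero]
  rw [Finset.sum_congr rfl (fun w _ => hgw w), pg_apply h]
  split_ifs with hcond
  · rw [Matrix.mul_apply]
  · simp

theorem pg_mul_pg_disjoint [NonAssocSemiring R] {m i k i₂ k₂ : ℕ}
    (h₁ : i + k ≤ i₂) (h₂ : i₂ + k₂ ≤ m) (A : TensM R N k) (B : TensM R N k₂) :
    pg m i A * pg m i₂ B = Matrix.of fun a b =>
      if ∀ t : Fin m, (t.val < i ∨ i + k ≤ t.val) → (t.val < i₂ ∨ i₂ + k₂ ≤ t.val) →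
          a t = b t then
        A (fun s => a ⟨i + s.val, by omega⟩) (fun s => b ⟨i + s.val, by omega⟩) *
          B (fun s => a ⟨i₂ + s.val, by omega⟩) (fun s => b ⟨i₂ + s.val, by omega⟩)
      else 0 := by
  have hik : i + k ≤ m := by omega
  ext a b
  rw [Matrix.mul_apply, Matrix.of_apply]
  set c₀ : Fin m → Fin N := fun t =>
    if i ≤ t.val ∧ t.val < i + k then b t else a t with hc₀
  rw [Finset.sum_eq_single c₀]
  · have e1 : ∀ t : Fin m, (t.val < i ∨ i + k ≤ t.val) → a t = c₀ t := by
      intro t ht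
      simp only [hc₀]
      rw [if_neg (by omega)]
    have e2 : (fun s : Fin k => c₀ ⟨i + s.val, by omega⟩) =
        (fun s : Fin k => b ⟨i + s.val, by omega⟩) := by
      funext s
      simp only [hc₀]
      rw [if_pos (by constructor <;> simp <;> omega)]
    have e3 : (fun s : Fin k₂ => c₀ ⟨i₂ + s.val, by omega⟩) =
        (fun s : Fin k₂ => a ⟨i₂ + s.val, by omega⟩) := by
      funext s
      simp only [hc₀]
      rw [if_neg (by simp; omega)]
    rw [pg_apply hik, pg_apply h₂, if_pos e1, e2, e3]
    by_cases hcond : ∀ t : Fin m, (t.val < i ∨ i + k ≤ t.val) →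
        (t.val < i₂ ∨ i₂ + k₂ ≤ t.val) → a t = b t
    · rw [if_pos hcond, if_pos]
      intro t ht
      simp only [hc₀]
      split_ifs with h'
      · rfl
      · exact hcond t (by omega) ht
    · rw [if_neg hcond, if_neg, mul_zero]
      intro hc
      apply hcond
      intro t ht ht2
      have := hc t ht2
      simp only [hc₀] at this
      rwa [if_neg (by omega)] at this
  · intro c _ hc
    have : ∃ t : Fin m, c t ≠ c₀ t := by
      by_contra hno
      push_neg at hno
      exact hc (funext hno)
    obtain ⟨t, ht⟩ := this
    by_cases hw : i ≤ t.val ∧ t.val < i + k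
    · -- c differs from b inside window 1 ⊆ outside window 2 → B factor is 0
      have hbt : c t ≠ b t := by simpa [hc₀, if_pos hw] using ht
      rw [pg_apply h₂ B c b, if_neg, mul_zero]
      intro hcond
      exact hbt (hcond t (by omega))
    · have hat : a t ≠ c t := by
        simp only [hc₀] at ht
        rw [if_neg hw] at ht
        exact fun h => ht h.symm
      rw [pg_apply hik A a c, if_neg, zero_mul]
      intro hcond
      exact hat (hcond t (by omega))
  · intro h
    exact absurd (Finset.mem_univ c₀) h

theorem pg_comm_of_entries_comm [NonAssocSemiring R] {m i k i₂ k₂ : ℕ}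
    (h₁ : i + k ≤ i₂) (h₂ : i₂ + k₂ ≤ m) (A : TensM R N k) (B : TensM R N k₂)
    (hcomm : ∀ x y u v, A x y * B u v = B u v * A x y) :
    pg m i A * pg m i₂ B = pg m i₂ B * pg m i A := by
  rw [pg_mul_pg_disjoint h₁ h₂]
  have h₂' : i₂ + k₂ ≤ m := h₂
  -- compute the other side with roles swapped; note windows are still disjoint
  ext a b
  rw [Matrix.mul_apply, Matrix.of_apply]
  -- direct: redo the single-point argument symmetrically via the disjoint lemma with swap
  -- use the same lemma but with A,B swapped and windows i₂,i: need i₂ + k₂ ≤ i is false.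
  -- Instead compute directly.
  set c₀ : Fin m → Fin N := fun t =>
    if i₂ ≤ t.val ∧ t.val < i₂ + k₂ then b t else a t with hc₀
  rw [show (∑ c, pg m i₂ B a c * pg m i A c b) = pg m i₂ B a c₀ * pg m i A c₀ b from ?_]
  · have e1 : ∀ t : Fin m, (t.val < i₂ ∨ i₂ + k₂ ≤ t.val) → a t = c₀ t := by
      intro t ht
      simp only [hc₀]
      rw [if_neg (by omega)]
    have e2 : (fun s : Fin k₂ => c₀ ⟨i₂ + s.val, by omega⟩) =
        (fun s : Fin k₂ => b ⟨i₂ + s.val, by omega⟩) := by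
      funext s
      simp only [hc₀]
      rw [if_pos (by constructor <;> simp <;> omega)]
    have e3 : (fun s : Fin k => c₀ ⟨i + s.val, by omega⟩) =
        (fun s : Fin k => a ⟨i + s.val, by omega⟩) := by
      funext s
      simp only [hc₀]
      rw [if_neg (by simp; omega)]
    rw [pg_apply h₂, pg_apply (show i + k ≤ m by omega), if_pos e1, e2, e3]
    by_cases hcond : ∀ t : Fin m, (t.val < i ∨ i + k ≤ t.val) →
        (t.val < i₂ ∨ i₂ + k₂ ≤ t.val) → a t = b t
    · rw [if_pos hcond, if_pos, hcomm]
      intro t ht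
      simp only [hc₀]
      split_ifs with h'
      · rfl
      · exact hcond t ht (by omega)
    · rw [if_neg hcond, if_neg, mul_zero]
      intro hc
      apply hcond
      intro t ht ht2
      have := hc t ht
      simp only [hc₀] at this
      rwa [if_neg (by omega)] at this
  · rw [Finset.sum_eq_single c₀]
    · intro c _ hc
      have : ∃ t : Fin m, c t ≠ c₀ t := by
        by_contra hno
        push_neg at hno
        exact hc (funext hno)
      obtain ⟨t, ht⟩ := this
      by_cases hw : i₂ ≤ t.val ∧ t.val < i₂ + k₂
      · have hbt : c t ≠ b t := by simpa [hc₀, if_pos hw] using ht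
        rw [pg_apply (show i + k ≤ m by omega) A c b, if_neg, mul_zero]
        intro hcond
        exact hbt (hcond t (by omega))
      · have hat : a t ≠ c t := by
          simp only [hc₀] at ht
          rw [if_neg hw] at ht
          exact fun h => ht h.symm
        rw [pg_apply h₂ B a c, if_neg, zero_mul]
        intro hcond
        exact hat (hcond t (by omega))
    · intro h
      exact absurd (Finset.mem_univ c₀) h

theorem embed_eq_pg [Zero R] {m k : ℕ} (h : k ≤ m) (M : TensM R N k) :
    embed m M = pg m 0 M := by
  ext a b
  simp only [embed, pg, Matrix.of_apply, dif_pos h, dif_pos (show 0 + k ≤ m by omega)]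
  have hc : (∀ t : Fin m, k ≤ t.val → a t = b t) ↔
      (∀ t : Fin m, (t.val < 0 ∨ 0 + k ≤ t.val) → a t = b t) := by
    constructor
    · intro h' t ht; exact h' t (by omega)
    · intro h' t ht; exact h' t (by omega)
  split_ifs with h1 h2 h2
  · congr 1 <;> funext s <;> congr 1 <;> simp [Fin.ext_iff]
  · exact absurd (hc.1 h1) h2
  · exact absurd (hc.2 h2) h1
  · rfl

theorem pg_place2 [Zero R] {m i k t : ℕ} (hm : i + k ≤ m) (ht : t + 1 < k)
    (M : RMat R N) :
    pg m i (place2 t M : TensM R N k) = (place2 (i + t) M : TensM R N m) := by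
  ext a b
  rw [pg_apply hm]
  simp only [place2, Matrix.of_apply]
  rw [dif_pos ht, dif_pos (show i + t + 1 < m by omega)]
  by_cases h1 : ∀ s : Fin m, (s.val < i ∨ i + k ≤ s.val) → a s = b s
  · rw [if_pos h1]
    by_cases h2 : ∀ s : Fin k, s.val ≠ t → s.val ≠ t + 1 →
        a ⟨i + s.val, by omega⟩ = b ⟨i + s.val, by omega⟩
    · have hP : ∀ s : Fin m, s.val ≠ i + t → s.val ≠ i + t + 1 → a s = b s := by
        intro s hs1 hs2
        by_cases hw : i ≤ s.val ∧ s.val < i + k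
        · have := h2 ⟨s.val - i, by omega⟩ (by simp; omega) (by simp; omega)
          convert this using 2 <;> simp [Fin.ext_iff] <;> omega
        · exact h1 s (by omega)
      rw [if_pos h2, if_pos hP]
      rfl
    · rw [if_neg h2, if_neg]
      intro hcond
      apply h2
      intro s hs1 hs2
      exact hcond ⟨i + s.val, by omega⟩ (by simp; omega) (by simp; omega)
  · rw [if_neg h1, if_neg]
    intro hcond
    apply h1
    intro s hs
    exact hcond s (by omega) (by omega)

theorem pg_place1 [Zero R] {m i k t : ℕ} (hm : i + k ≤ m) (ht : t < k)
    (M : Matrix (Fin N) (Fin N) R) :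
    pg m i (place1 t M : TensM R N k) = (place1 (i + t) M : TensM R N m) := by
  ext a b
  rw [pg_apply hm]
  simp only [place1, Matrix.of_apply]
  rw [dif_pos ht, dif_pos (show i + t < m by omega)]
  by_cases h1 : ∀ s : Fin m, (s.val < i ∨ i + k ≤ s.val) → a s = b s
  · rw [if_pos h1]
    by_cases h2 : ∀ s : Fin k, s.val ≠ t → a ⟨i + s.val, by omega⟩ = b ⟨i + s.val, by omega⟩
    · have hP : ∀ s : Fin m, s.val ≠ i + t → a s = b s := by
        intro s hs1
        by_cases hw : i ≤ s.val ∧ s.val < i + k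
        · have := h2 ⟨s.val - i, by omega⟩ (by simp; omega)
          convert this using 2 <;> simp [Fin.ext_iff] <;> omega
        · exact h1 s (by omega)
      rw [if_pos h2, if_pos hP]
    · rw [if_neg h2, if_neg]
      intro hcond
      apply h2
      intro s hs1
      exact hcond ⟨i + s.val, by omega⟩ (by simp; omega)
  · rw [if_neg h1, if_neg]
    intro hcond
    apply h1
    intro s hs
    exact hcond s (by omega)

theorem pg_pg [Zero R] {m k i i₂ k' : ℕ} (hm : i + k ≤ m) (hk : i₂ + k' ≤ k)
    (M : TensM R N k') : pg m i (pg k i₂ M) = pg m (i + i₂) M := by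
  ext a b
  rw [pg_apply hm, pg_apply (show i + i₂ + k' ≤ m by omega)]
  by_cases h1 : ∀ s : Fin m, (s.val < i ∨ i + k ≤ s.val) → a s = b s
  · rw [if_pos h1]
    rw [pg_apply hk]
    by_cases h2 : ∀ s : Fin k, (s.val < i₂ ∨ i₂ + k' ≤ s.val) →
        a ⟨i + s.val, by omega⟩ = b ⟨i + s.val, by omega⟩
    · have hP : ∀ s : Fin m, (s.val < i + i₂ ∨ i + i₂ + k' ≤ s.val) → a s = b s := by
        intro s hs
        by_cases hw : i ≤ s.val ∧ s.val < i + k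
        · have := h2 ⟨s.val - i, by omega⟩ (by simp; omega)
          convert this using 2 <;> simp [Fin.ext_iff] <;> omega
        · exact h1 s (by omega)
      rw [if_pos h2, if_pos hP]
      congr 1 <;> funext s <;> congr 1 <;> simp [Fin.ext_iff] <;> omega
    · rw [if_neg h2, if_neg]
      intro hcond
      apply h2
      intro s hs
      exact hcond ⟨i + s.val, by omega⟩ (by simp; omega)
  · rw [if_neg h1, if_neg]
    intro hcond
    apply h1
    intro s hs
    exact hcond s (by omega)

theorem place2_zero_apply [Zero R] (M : RMat R N) (a b : Fin 2 → Fin N) :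
    (place2 0 M : TensM R N 2) a b = M (a 0, a 1) (b 0, b 1) := by
  simp only [place2, Matrix.of_apply]
  rw [dif_pos (by omega : (0:ℕ) + 1 < 2), if_pos]
  · rfl
  · intro t ht0 ht1
    exfalso
    have := t.isLt
    omega

theorem place2_zero_mul [NonAssocSemiring R] (A B : RMat R N) :
    (place2 0 (A * B) : TensM R N 2) = place2 0 A * place2 0 B := by
  ext a b
  rw [Matrix.mul_apply, place2_zero_apply, Matrix.mul_apply]
  rw [← Equiv.sum_comp (finTwoArrowEquiv (Fin N)).symm
    (fun c => (place2 0 A : TensM R N 2) a c * (place2 0 B : TensM R N 2) c b)]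
  apply Finset.sum_congr rfl
  intro p _
  rw [place2_zero_apply, place2_zero_apply]
  congr 1 <;> simp [finTwoArrowEquiv]

theorem place2_zero_one [NonAssocSemiring R] [DecidableEq (Fin N × Fin N)] :
    (place2 0 (1 : RMat R N) : TensM R N 2) = 1 := by
  ext a b
  rw [place2_zero_apply, Matrix.one_apply, Matrix.one_apply]
  have : (a 0, a 1) = (b 0, b 1) ↔ a = b := by
    constructor
    · intro h
      funext t
      have h0 := congrArg Prod.fst h
      have h1 := congrArg Prod.snd h
      fin_cases t <;> assumption
    · intro h; rw [h]
  split_ifs with h1 h2 h2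
  · rfl
  · exact absurd (this.1 h1) h2
  · exact absurd (this.2 h2) h1
  · rfl

theorem place2_smul {S : Type*} [Zero R] [SMulZeroClass S R] {m : ℕ} (i : ℕ)
    (c : S) (M : RMat R N) : (place2 i (c • M) : TensM R N m) = c • place2 i M := by
  ext a b
  simp only [place2, Matrix.of_apply, Matrix.smul_apply]
  split_ifs <;> simp

theorem place2_add [AddMonoid R] {m : ℕ} (i : ℕ) (A B : RMat R N) :
    (place2 i (A + B) : TensM R N m) = place2 i A + place2 i B := by
  ext a b
  simp only [place2, Matrix.of_apply, Matrix.add_apply]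
  split_ifs <;> simp

theorem place2_map {S : Type*} [Zero R] [Zero S] {m : ℕ} (i : ℕ) (f : R → S)
    (hf : f 0 = 0) (M : RMat R N) :
    (place2 i (M.map f) : TensM S N m) = (place2 i M : TensM R N m).map f := by
  ext a b
  simp only [place2, Matrix.of_apply, Matrix.map_apply]
  split_ifs <;> simp [hf]

theorem place1_map {S : Type*} [Zero R] [Zero S] {m : ℕ} (i : ℕ) (f : R → S)
    (hf : f 0 = 0) (M : Matrix (Fin N) (Fin N) R) :
    (place1 i (M.map f) : TensM S N m) = (place1 i M : TensM R N m).map f := by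
  ext a b
  simp only [place1, Matrix.of_apply, Matrix.map_apply]
  split_ifs <;> simp [hf]

theorem place2_eq_pg [Zero R] {m : ℕ} {i : ℕ} (h : i + 1 < m) (M : RMat R N) :
    (place2 i M : TensM R N m) = pg m i (place2 0 M : TensM R N 2) := by
  rw [pg_place2 (by omega) (by omega)]
  norm_num

theorem place2_mul [NonAssocSemiring R] {m : ℕ} {i : ℕ} (h : i + 1 < m) (A B : RMat R N) :
    (place2 i (A * B) : TensM R N m) = place2 i A * place2 i B := by
  rw [place2_eq_pg h, place2_eq_pg h, place2_eq_pg h, place2_zero_mul,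
    pg_mul (by omega)]

theorem place2_one [NonAssocSemiring R] {m : ℕ} {i : ℕ} (h : i + 1 < m) :
    (place2 i (1 : RMat R N) : TensM R N m) = 1 := by
  rw [place2_eq_pg h, place2_zero_one, pg_one (by omega)]

/-- Splitting equivalence for multi-indices. -/
def msplit (N k l : ℕ) : (Fin (k + l) → Fin N) ≃ (Fin k → Fin N) × (Fin l → Fin N) where
  toFun a := (fun s => a ⟨s.val, by omega⟩, fun s => a ⟨k + s.val, by omega⟩)
  invFun p t := if h : t.val < k then p.1 ⟨t.val, h⟩ else p.2 ⟨t.val - k, by omega⟩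
  left_inv a := by
    funext t
    by_cases h : t.val < k
    · simp only [dif_pos h]
    · simp only [dif_neg h]
      congr 1
      simp [Fin.ext_iff]; omega
  right_inv p := by
    ext s
    · simp only [dif_pos s.isLt]
    · have : ¬ (k + s.val < k) := by omega
      simp only [dif_neg this]
      congr 1
      simp [Fin.ext_iff]

theorem trace_pg_mul_pg [NonAssocSemiring R] {k l : ℕ}
    (A : TensM R N k) (B : TensM R N l) :
    Matrix.trace (pg (k + l) 0 A * pg (k + l) k B) = Matrix.trace A * Matrix.trace B := by
  rw [pg_mul_pg_disjoint (by omega) (by omega)]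
  have hr : Matrix.trace A * Matrix.trace B =
      ∑ p : (Fin k → Fin N) × (Fin l → Fin N), A p.1 p.1 * B p.2 p.2 := by
    rw [Fintype.sum_prod_type]
    unfold Matrix.trace
    rw [Finset.sum_mul_sum]
    rfl
  rw [hr]
  unfold Matrix.trace
  apply Fintype.sum_equiv (msplit N k l)
  intro a
  simp only [Matrix.diag_apply, Matrix.of_apply]
  rw [if_pos (fun t _ _ => trivial)]
  simp only [msplit, Equiv.coe_fn_mk]
  congr 1
  congr 1 <;> funext s <;> congr 1 <;> simp [Fin.ext_iff]

theorem trace_mul_comm_central {𝒜 : Type*} [NonAssocSemiring 𝒜] {n : Type*} [Fintype n]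
    (X Y : Matrix n n 𝒜) (hY : ∀ p r c, Y p r * c = c * Y p r) :
    Matrix.trace (X * Y) = Matrix.trace (Y * X) := by
  unfold Matrix.trace
  simp only [Matrix.diag_apply, Matrix.mul_apply]
  rw [Finset.sum_comm]
  apply Finset.sum_congr rfl
  intro i _
  apply Finset.sum_congr rfl
  intro j _
  exact (hY i j (X j i)).symm

end NewtonAux

section CoreF

variable {F : Type*} [Field F] {N : ℕ}

theorem qnum_one {q : F} (hd : q - q⁻¹ ≠ 0) : qnum q 1 = 1 := by
  simp [qnum, div_self hd]

theorem qnum_succ {q : F} (hq : q ≠ 0) (hd : q - q⁻¹ ≠ 0) (k : ℕ) :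
    q⁻¹ ^ k + q * qnum q k = qnum q (k + 1) := by
  unfold qnum
  rw [eq_div_iff hd, add_mul, mul_assoc, div_mul_cancel₀ _ hd, pow_succ, pow_succ]
  ring

theorem qnum_coeff {q : F} (hq : q ≠ 0) (i k : ℕ) :
    q ^ (i + 1) * q⁻¹ ^ (k + 1) = q ^ i * q⁻¹ ^ k := by
  rw [pow_succ, pow_succ, mul_mul_mul_comm, mul_inv_cancel₀ hq, mul_one]

/-- Descending chain `R̂_{s+l} R̂_{s+l-1} ⋯ R̂_{s+1}` (0-based positions `s+l-1` down to `s`). -/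
noncomputable def dchain (m : ℕ) (Rh : RMat F N) (s : ℕ) : ℕ → TensM F N m
  | 0 => 1
  | l + 1 => place2 (s + l) Rh * dchain m Rh s l

theorem heckeM {q : F} {Rh : RMat F N} (hH : Hecke q Rh) {m i : ℕ} (h : i + 1 < m) :
    (place2 i Rh : TensM F N m) * place2 i Rh = 1 + (q - q⁻¹) • place2 i Rh := by
  rw [← place2_mul h, hH, place2_add, place2_one h, place2_smul]

theorem ybM {Rh : RMat F N} (hYB : YangBaxter Rh) {m i : ℕ} (h : i + 2 < m) :
    (place2 i Rh : TensM F N m) * place2 (i + 1) Rh * place2 i Rh =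
      place2 (i + 1) Rh * place2 i Rh * place2 (i + 1) Rh := by
  have h3 : i + 3 ≤ m := by omega
  have := congrArg (pg m i) hYB
  rw [pg_mul h3, pg_mul h3, pg_mul h3, pg_mul h3] at this
  rw [pg_place2 h3 (by omega), pg_place2 h3 (by omega)] at this
  simpa using this

theorem place2_comm_place2 {R : Type*} [CommRing R] {m i i₂ : ℕ} (h : i + 2 ≤ i₂)
    (h2 : i₂ + 1 < m) (A B : RMat R N) :
    (place2 i A : TensM R N m) * place2 i₂ B = place2 i₂ B * place2 i A := by
  rw [place2_eq_pg (show i + 1 < m by omega), place2_eq_pg h2]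
  exact pg_comm_of_entries_comm (by omega) (by omega) _ _ (fun x y u v => mul_comm _ _)

theorem pg0_comm_place2 {R : Type*} [CommRing R] {m k i : ℕ} (h : k ≤ i) (h2 : i + 1 < m)
    (A : TensM R N k) (B : RMat R N) :
    pg m 0 A * place2 i B = place2 i B * pg m 0 A := by
  rw [place2_eq_pg h2]
  exact pg_comm_of_entries_comm (by omega) (by omega) A _ (fun x y u v => mul_comm _ _)

theorem place2_comm_rcf {Rh : RMat F N} {m s l j : ℕ} (h : s + l < j)
    (h2 : j + 1 < m) :
    (place2 j Rh : TensM F N m) * rChainFrom m Rh s l =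
      rChainFrom m Rh s l * place2 j Rh := by
  induction l with
  | zero => rw [rChainFrom]; rw [one_mul, mul_one]
  | succ l ih =>
      rw [rChainFrom, ← mul_assoc, ih (by omega), mul_assoc,
        ← place2_comm_place2 (show s + l + 2 ≤ j by omega) h2, ← mul_assoc]

theorem place2_comm_dchain {Rh : RMat F N} {m s l j : ℕ} (h : s + l < j)
    (h2 : j + 1 < m) :
    (place2 j Rh : TensM F N m) * dchain m Rh s l = dchain m Rh s l * place2 j Rh := by
  induction l with
  | zero => rw [dchain]; rw [one_mul, mul_one]
  | succ l ih =>
      rw [dchain, ← mul_assoc, ← place2_comm_place2 (show s + l + 2 ≤ j by omega) h2,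
        mul_assoc, ih (by omega), ← mul_assoc]

theorem rcf_cons {Rh : RMat F N} {m s l : ℕ} :
    rChainFrom m Rh s (l + 1) = (place2 s Rh : TensM F N m) * rChainFrom m Rh (s + 1) l := by
  induction l with
  | zero => rw [rChainFrom, rChainFrom, rChainFrom, one_mul, mul_one, Nat.add_zero]
  | succ l ih =>
      rw [rChainFrom, ih, rChainFrom, mul_assoc, show s + (l + 1) = s + 1 + l from by omega]

theorem dchain_snoc {Rh : RMat F N} {m s l : ℕ} :
    dchain m Rh s (l + 1) = dchain m Rh (s + 1) l * (place2 s Rh : TensM F N m) := by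
  induction l with
  | zero => rw [dchain, dchain, dchain, one_mul, mul_one, Nat.add_zero]
  | succ l ih =>
      rw [dchain, ih, dchain, ← mul_assoc, show s + (l + 1) = s + 1 + l from by omega]

end CoreF

section ChainEqs
variable {F : Type*} [Field F] {N : ℕ}

theorem rcf_succ {Rh : RMat F N} {m s l : ℕ} :
    rChainFrom m Rh s (l + 1) = rChainFrom m Rh s l * place2 (s + l) Rh := rfl

theorem rcf_zero {Rh : RMat F N} {m s : ℕ} :
    rChainFrom m Rh s 0 = (1 : TensM F N m) := rfl

theorem dchain_succ {Rh : RMat F N} {m s l : ℕ} :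
    dchain m Rh s (l + 1) = place2 (s + l) Rh * dchain m Rh s l := rfl

theorem dchain_zero {Rh : RMat F N} {m s : ℕ} :
    dchain m Rh s 0 = (1 : TensM F N m) := rfl

theorem coeffB {q : F} (hq : q ≠ 0) (K : ℕ) :
    q ^ 0 * q⁻¹ ^ K + q ^ 1 * q⁻¹ ^ K * (q - q⁻¹) = q * (q ^ 1 * q⁻¹ ^ K) := by
  have h1 : q * q⁻¹ = 1 := mul_inv_cancel₀ hq
  ring_nf
  rw [h1]
  ring

end ChainEqs

section SymsPack

variable {F : Type*} [Field F] {N : ℕ}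

theorem smul_cancel_left {M : Type*} [AddCommMonoid M] [Module F M] {c : F} (hc : c ≠ 0)
    {x y : M} (h : c • x = c • y) : x = y := by
  have h2 := congrArg (fun z : M => c⁻¹ • z) h
  simpa [smul_smul, inv_mul_cancel₀ hc] using h2

theorem syms_succ_eq {q : F} {Rh : RMat F N} (k : ℕ) (hk : 1 ≤ k) :
    syms Rh q (k + 1) = (qnum q (k + 1))⁻¹ •
      (embed (k + 1) (syms Rh q k) *
        (q⁻¹ ^ k • (1 : TensM F N (k + 1)) + qnum q k • place2 (k - 1) Rh) *
        embed (k + 1) (syms Rh q k)) := by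
  cases k with
  | zero => omega
  | succ k' => rfl

theorem esyms_succ {q : F} {Rh : RMat F N} {m k : ℕ} (hk : 1 ≤ k) (hm : k + 1 ≤ m) :
    embed m (syms Rh q (k + 1)) = (qnum q (k + 1))⁻¹ •
      (embed m (syms Rh q k) *
        (q⁻¹ ^ k • (1 : TensM F N m) + qnum q k • place2 (k - 1) Rh) *
        embed m (syms Rh q k)) := by
  rw [syms_succ_eq k hk]
  rw [embed_eq_pg hm, embed_eq_pg (show k ≤ k + 1 by omega), pg_smul,
    pg_mul (show 0 + (k+1) ≤ m by omega), pg_mul (show 0 + (k+1) ≤ m by omega),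
    pg_add, pg_smul, pg_smul, pg_one (show 0 + (k+1) ≤ m by omega),
    pg_place2 (show 0 + (k+1) ≤ m by omega) (show k - 1 + 1 < k + 1 by omega),
    pg_pg (show 0 + (k+1) ≤ m by omega) (show (0:ℕ) + k ≤ k + 1 by omega),
    Nat.zero_add, Nat.zero_add, ← embed_eq_pg (show k ≤ m by omega)]

/-- Package of properties of the embedded `q`-symmetrizers. -/
structure SPack (q : F) (Rh : RMat F N) (m k : ℕ) : Prop where
  idem : embed m (syms Rh q k) * embed m (syms Rh q k) = embed m (syms Rh q k)
  absorbL : embed m (syms Rh q (k - 1)) * embed m (syms Rh q k) = embed m (syms Rh q k)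
  absorbR : embed m (syms Rh q k) * embed m (syms Rh q (k - 1)) = embed m (syms Rh q k)
  commL : ∀ i, i + 1 < k →
    place2 i Rh * embed m (syms Rh q k) = q • embed m (syms Rh q k)
  commR : ∀ i, i + 1 < k →
    embed m (syms Rh q k) * place2 i Rh = q • embed m (syms Rh q k)
  eL : qnum q k • embed m (syms Rh q k) =
      (∑ i ∈ Finset.range k, (q ^ i * q⁻¹ ^ (k - 1)) • rChainFrom m Rh (k - 1 - i) i) *
        embed m (syms Rh q (k - 1))
  eR : qnum q k • embed m (syms Rh q k) =
      embed m (syms Rh q (k - 1)) *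
        ∑ i ∈ Finset.range k, (q ^ i * q⁻¹ ^ (k - 1)) • dchain m Rh (k - 1 - i) i

theorem embed_syms_zero {q : F} {Rh : RMat F N} {m : ℕ} :
    embed m (syms Rh q 0) = (1 : TensM F N m) := by
  show embed m (1 : TensM F N 0) = 1
  rw [embed_eq_pg (by omega), pg_one (by omega)]

theorem embed_syms_one {q : F} {Rh : RMat F N} {m : ℕ} (hm : 1 ≤ m) :
    embed m (syms Rh q 1) = (1 : TensM F N m) := by
  show embed m (1 : TensM F N 1) = 1
  rw [embed_eq_pg hm, pg_one (by omega)]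

theorem spack_one {q : F} {Rh : RMat F N} {m : ℕ} (hd : q - q⁻¹ ≠ 0) (hm : 1 ≤ m) :
    SPack q Rh m 1 := by
  have h1 := embed_syms_one (q := q) (Rh := Rh) (m := m) hm
  have h0 := embed_syms_zero (q := q) (Rh := Rh) (m := m)
  constructor
  · rw [h1, one_mul]
  · rw [h1, h0, one_mul]
  · rw [h1, h0, one_mul]
  · intro i hi; omega
  · intro i hi; omega
  · rw [h1, h0, qnum_one hd, Finset.sum_range_one]
    simp [rChainFrom]
  · rw [h1, h0, qnum_one hd, Finset.sum_range_one]
    simp [dchain]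

end SymsPack

section SPackSucc

variable {F : Type*} [Field F] {N : ℕ}

set_option maxHeartbeats 1000000 in
theorem spack_succ {q : F} {Rh : RMat F N} {m k : ℕ}
    (hq : q ≠ 0) (hd : q - q⁻¹ ≠ 0) (hqn : ∀ j : ℕ, 1 ≤ j → qnum q j ≠ 0)
    (hYB : YangBaxter Rh) (hHecke : Hecke q Rh)
    (hk : 1 ≤ k) (hm : k + 1 ≤ m) (P : SPack q Rh m k) :
    SPack q Rh m (k + 1) := by
  obtain ⟨k1, rfl⟩ : ∃ k1, k = k1 + 1 := ⟨k - 1, by omega⟩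
  have hqn1 : qnum q (k1 + 2) ≠ 0 := hqn _ (by omega)
  set Ek : TensM F N m := embed m (syms Rh q (k1 + 1)) with hEkd
  set Ek1 : TensM F N m := embed m (syms Rh q k1) with hEk1d
  set E2 : TensM F N m := embed m (syms Rh q (k1 + 2)) with hE2d
  set X : TensM F N m :=
    q⁻¹ ^ (k1 + 1) • (1 : TensM F N m) + qnum q (k1 + 1) • place2 k1 Rh with hXd
  have hrec : E2 = (qnum q (k1 + 2))⁻¹ • (Ek * X * Ek) := by
    rw [hE2d, hEkd, hXd]
    exact esyms_succ (by omega) hm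
  have hrec' : qnum q (k1 + 2) • E2 = Ek * X * Ek := by
    rw [hrec, smul_smul, mul_inv_cancel₀ hqn1, one_smul]
  have hidem : Ek * Ek = Ek := P.idem
  have habsL : Ek1 * Ek = Ek := P.absorbL
  have habsR : Ek * Ek1 = Ek := P.absorbR
  have hPeL : qnum q (k1 + 1) • Ek =
      (∑ i ∈ Finset.range (k1 + 1),
        (q ^ i * q⁻¹ ^ k1) • rChainFrom m Rh (k1 - i) i) * Ek1 := P.eL
  have hPeR : qnum q (k1 + 1) • Ek =
      Ek1 * ∑ i ∈ Finset.range (k1 + 1),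
        (q ^ i * q⁻¹ ^ k1) • dchain m Rh (k1 - i) i := P.eR
  have hcomm0 : Ek1 * place2 k1 Rh = place2 k1 Rh * Ek1 := by
    rw [hEk1d, embed_eq_pg (show k1 ≤ m by omega)]
    exact pg0_comm_place2 (R := F) (N := N) (m := m) (le_refl k1) (by omega) (syms Rh q k1) Rh
  have hEXE : Ek * X * Ek =
      q⁻¹ ^ (k1 + 1) • Ek + qnum q (k1 + 1) • (Ek * place2 k1 Rh * Ek) := by
    rw [hXd, mul_add, add_mul, mul_smul_comm, mul_one, smul_mul_assoc, hidem,
      mul_smul_comm, smul_mul_assoc]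
  -- left expansion at level k1+2
  have heL : qnum q (k1 + 2) • E2 =
      (∑ i ∈ Finset.range (k1 + 2),
        (q ^ i * q⁻¹ ^ (k1 + 1)) • rChainFrom m Rh (k1 + 1 - i) i) * Ek := by
    have h2 : qnum q (k1 + 1) • (Ek * place2 k1 Rh * Ek) =
        (∑ i ∈ Finset.range (k1 + 1),
          (q ^ i * q⁻¹ ^ k1) • rChainFrom m Rh (k1 - i) (i + 1)) * Ek := by
      have e1 : qnum q (k1 + 1) • (Ek * place2 k1 Rh * Ek) =
          (qnum q (k1 + 1) • Ek) * (place2 k1 Rh * Ek) := by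
        simp only [smul_mul_assoc, mul_assoc]
      rw [e1, hPeL, mul_assoc, ← mul_assoc Ek1, hcomm0, mul_assoc (place2 k1 Rh), habsL,
        Finset.sum_mul, Finset.sum_mul]
      apply Finset.sum_congr rfl
      intro i hi
      have hi' : i < k1 + 1 := Finset.mem_range.1 hi
      rw [smul_mul_assoc, smul_mul_assoc, ← mul_assoc]
      congr 2
      rw [rcf_succ, show k1 - i + i = k1 from by omega]
    rw [hrec', hEXE, h2]
    rw [Finset.sum_range_succ' _ (k1 + 1), add_mul]
    have hz : ((q ^ 0 * q⁻¹ ^ (k1 + 1)) • rChainFrom m Rh (k1 + 1 - 0) 0) * Ek =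
        q⁻¹ ^ (k1 + 1) • Ek := by
      rw [rcf_zero, pow_zero, one_mul, smul_mul_assoc, one_mul]
    rw [hz]
    have hsame : (∑ i ∈ Finset.range (k1 + 1),
          (q ^ (i + 1) * q⁻¹ ^ (k1 + 1)) • rChainFrom m Rh (k1 + 1 - (i + 1)) (i + 1)) * Ek =
        (∑ i ∈ Finset.range (k1 + 1),
          (q ^ i * q⁻¹ ^ k1) • rChainFrom m Rh (k1 - i) (i + 1)) * Ek := by
      congr 1
      apply Finset.sum_congr rfl
      intro i hi
      rw [qnum_coeff hq, show k1 + 1 - (i + 1) = k1 - i from by omega]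
    rw [hsame, add_comm]
  -- right expansion at level k1+2
  have heR : qnum q (k1 + 2) • E2 =
      Ek * ∑ i ∈ Finset.range (k1 + 2),
        (q ^ i * q⁻¹ ^ (k1 + 1)) • dchain m Rh (k1 + 1 - i) i := by
    have h2 : qnum q (k1 + 1) • (Ek * place2 k1 Rh * Ek) =
        Ek * ∑ i ∈ Finset.range (k1 + 1),
          (q ^ i * q⁻¹ ^ k1) • dchain m Rh (k1 - i) (i + 1) := by
      have e1 : qnum q (k1 + 1) • (Ek * place2 k1 Rh * Ek) =
          (Ek * place2 k1 Rh) * (qnum q (k1 + 1) • Ek) := by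
        simp only [smul_mul_assoc, mul_smul_comm, mul_assoc]
      rw [e1, hPeR, ← mul_assoc, mul_assoc Ek, ← hcomm0, ← mul_assoc Ek, habsR,
        Finset.mul_sum, Finset.mul_sum]
      apply Finset.sum_congr rfl
      intro i hi
      have hi' : i < k1 + 1 := Finset.mem_range.1 hi
      rw [mul_smul_comm, mul_smul_comm]
      congr 1
      rw [dchain_succ, show k1 - i + i = k1 from by omega, mul_assoc]
    rw [hrec', hEXE, h2]
    rw [Finset.sum_range_succ' _ (k1 + 1), mul_add]
    have hz : Ek * ((q ^ 0 * q⁻¹ ^ (k1 + 1)) • dchain m Rh (k1 + 1 - 0) 0) =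
        q⁻¹ ^ (k1 + 1) • Ek := by
      rw [dchain_zero, pow_zero, one_mul, mul_smul_comm, mul_one]
    rw [hz]
    have hsame : Ek * (∑ i ∈ Finset.range (k1 + 1),
          (q ^ (i + 1) * q⁻¹ ^ (k1 + 1)) • dchain m Rh (k1 + 1 - (i + 1)) (i + 1)) =
        Ek * ∑ i ∈ Finset.range (k1 + 1),
          (q ^ i * q⁻¹ ^ k1) • dchain m Rh (k1 - i) (i + 1) := by
      congr 1
      apply Finset.sum_congr rfl
      intro i hi
      rw [qnum_coeff hq, show k1 + 1 - (i + 1) = k1 - i from by omega]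
    rw [hsame, add_comm]
  -- generic YB move with a trailing factor
  have ybW : ∀ (k2 : ℕ), k2 + 1 = k1 → ∀ W : TensM F N m,
      place2 (k2+1) Rh * (place2 k2 Rh * (place2 (k2+1) Rh * W)) =
        place2 k2 Rh * (place2 (k2+1) Rh * (place2 k2 Rh * W)) := by
    intro k2 hk2 W
    have hyb := ybM hYB (show k2 + 2 < m by omega)
    calc place2 (k2+1) Rh * (place2 k2 Rh * (place2 (k2+1) Rh * W))
        = (place2 (k2+1) Rh * place2 k2 Rh * place2 (k2+1) Rh) * W := by
          simp only [mul_assoc]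
      _ = (place2 k2 Rh * place2 (k2+1) Rh * place2 k2 Rh) * W := by rw [← hyb]
      _ = place2 k2 Rh * (place2 (k2+1) Rh * (place2 k2 Rh * W)) := by
          simp only [mul_assoc]
  -- commutation at the top position k1, left version
  have hcommLtop : place2 k1 Rh * E2 = q • E2 := by
    have hkey : ∑ i ∈ Finset.range (k1+2), place2 k1 Rh *
          (((q ^ i * q⁻¹ ^ (k1+1)) • rChainFrom m Rh (k1 + 1 - i) i) * Ek) =
        ∑ i ∈ Finset.range (k1+2),
          q • (((q ^ i * q⁻¹ ^ (k1+1)) • rChainFrom m Rh (k1 + 1 - i) i) * Ek) := by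
      rw [Finset.sum_range_succ' _ (k1 + 1), Finset.sum_range_succ' _ (k1 + 1),
        Finset.sum_range_succ' _ k1, Finset.sum_range_succ' _ k1,
        add_assoc, add_assoc]
      congr 1
      · apply Finset.sum_congr rfl
        intro i hi
        have hi' : i < k1 := Finset.mem_range.1 hi
        obtain ⟨k2, rfl⟩ : ∃ k2, k1 = k2 + 1 := ⟨k1 - 1, by omega⟩
        have core : place2 (k2+1) Rh * (rChainFrom m Rh (k2 - i) (i+2) * Ek) =
            q • (rChainFrom m Rh (k2 - i) (i+2) * Ek) := by
          have e1 : rChainFrom m Rh (k2 - i) (i+2) =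
              rChainFrom m Rh (k2 - i) i * place2 k2 Rh * place2 (k2+1) Rh := by
            rw [rcf_succ, rcf_succ,
              show k2 - i + i = k2 from by omega,
              show k2 - i + (i+1) = k2 + 1 from by omega]
          have hcomC : place2 (k2+1) Rh * rChainFrom m Rh (k2 - i) i =
              rChainFrom m Rh (k2 - i) i * place2 (k2+1) Rh :=
            place2_comm_rcf (by omega) (by omega)
          rw [e1]
          simp only [mul_assoc]
          rw [← mul_assoc (place2 (k2+1) Rh), hcomC, mul_assoc,
            ybW k2 rfl Ek, P.commL k2 (by omega)]
          simp only [mul_smul_comm]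
          rfl
        calc place2 (k2+1+1-1) Rh *
              (((q ^ (i+1+1) * q⁻¹ ^ (k2+1+1)) •
                rChainFrom m Rh (k2 + 1 + 1 - (i+1+1)) (i+1+1)) * Ek)
            = (q ^ (i+1+1) * q⁻¹ ^ (k2+1+1)) •
                (place2 (k2+1) Rh * (rChainFrom m Rh (k2 - i) (i+2) * Ek)) := by
              rw [smul_mul_assoc, mul_smul_comm,
                show k2 + 1 + 1 - (i+1+1) = k2 - i from by omega,
                show k2 + 1 + 1 - 1 = k2 + 1 from by omega]
          _ = (q ^ (i+1+1) * q⁻¹ ^ (k2+1+1)) • (q • (rChainFrom m Rh (k2 - i) (i+2) * Ek)) := by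
              rw [core]
          _ = q • (((q ^ (i+1+1) * q⁻¹ ^ (k2+1+1)) •
                rChainFrom m Rh (k2 + 1 + 1 - (i+1+1)) (i+1+1)) * Ek) := by
              rw [smul_comm, smul_mul_assoc,
                show k2 + 1 + 1 - (i+1+1) = k2 - i from by omega]
      · -- the i = 0, 1 block, via the Hecke relation
        have hu1 : ((q ^ (0+1) * q⁻¹ ^ (k1+1)) • rChainFrom m Rh (k1 + 1 - (0+1)) (0+1)) * Ek
            = (q ^ 1 * q⁻¹ ^ (k1+1)) • (place2 k1 Rh * Ek) := by
          rw [smul_mul_assoc]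
          congr 1
          rw [rcf_succ, rcf_zero, one_mul,
            show k1 + 1 - (0+1) + 0 = k1 from by omega]
        have hu0 : ((q ^ 0 * q⁻¹ ^ (k1+1)) • rChainFrom m Rh (k1 + 1 - 0) 0) * Ek
            = (q ^ 0 * q⁻¹ ^ (k1+1)) • Ek := by
          rw [rcf_zero, smul_mul_assoc, one_mul]
        rw [hu1, hu0]
        have hPP : place2 k1 Rh * (place2 k1 Rh * Ek) =
            Ek + (q - q⁻¹) • (place2 k1 Rh * Ek) := by
          rw [← mul_assoc, heckeM hHecke (show k1 + 1 < m by omega), add_mul, one_mul,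
            smul_mul_assoc]
        rw [mul_smul_comm, mul_smul_comm, hPP]
        match_scalars <;> field_simp <;> ring
    apply smul_cancel_left hqn1
    calc qnum q (k1+2) • (place2 k1 Rh * E2)
        = place2 k1 Rh * (qnum q (k1+2) • E2) := (mul_smul_comm _ _ _).symm
      _ = place2 k1 Rh * ((∑ i ∈ Finset.range (k1+2),
            (q ^ i * q⁻¹ ^ (k1+1)) • rChainFrom m Rh (k1 + 1 - i) i) * Ek) := by rw [heL]
      _ = ∑ i ∈ Finset.range (k1+2), place2 k1 Rh *
            (((q ^ i * q⁻¹ ^ (k1+1)) • rChainFrom m Rh (k1 + 1 - i) i) * Ek) := by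
          rw [Finset.sum_mul, Finset.mul_sum]
      _ = ∑ i ∈ Finset.range (k1+2),
            q • (((q ^ i * q⁻¹ ^ (k1+1)) • rChainFrom m Rh (k1 + 1 - i) i) * Ek) := hkey
      _ = q • ((∑ i ∈ Finset.range (k1+2),
            (q ^ i * q⁻¹ ^ (k1+1)) • rChainFrom m Rh (k1 + 1 - i) i) * Ek) := by
          rw [Finset.sum_mul, ← Finset.smul_sum]
      _ = q • (qnum q (k1+2) • E2) := by rw [heL]
      _ = qnum q (k1+2) • (q • E2) := smul_comm _ _ _
  -- commutation at the top position k1, right version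
  have hcommRtop : E2 * place2 k1 Rh = q • E2 := by
    have hkey : ∑ i ∈ Finset.range (k1+2),
          (Ek * ((q ^ i * q⁻¹ ^ (k1+1)) • dchain m Rh (k1 + 1 - i) i)) * place2 k1 Rh =
        ∑ i ∈ Finset.range (k1+2),
          q • (Ek * ((q ^ i * q⁻¹ ^ (k1+1)) • dchain m Rh (k1 + 1 - i) i)) := by
      rw [Finset.sum_range_succ' _ (k1 + 1), Finset.sum_range_succ' _ (k1 + 1),
        Finset.sum_range_succ' _ k1, Finset.sum_range_succ' _ k1,
        add_assoc, add_assoc]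
      congr 1
      · apply Finset.sum_congr rfl
        intro i hi
        have hi' : i < k1 := Finset.mem_range.1 hi
        obtain ⟨k2, rfl⟩ : ∃ k2, k1 = k2 + 1 := ⟨k1 - 1, by omega⟩
        have core : (Ek * dchain m Rh (k2 - i) (i+2)) * place2 (k2+1) Rh =
            q • (Ek * dchain m Rh (k2 - i) (i+2)) := by
          have e1 : dchain m Rh (k2 - i) (i+2) =
              place2 (k2+1) Rh * (place2 k2 Rh * dchain m Rh (k2 - i) i) := by
            rw [dchain_succ, dchain_succ,
              show k2 - i + i = k2 from by omega,
              show k2 - i + (i+1) = k2 + 1 from by omega]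
          have hcomC : place2 (k2+1) Rh * dchain m Rh (k2 - i) i =
              dchain m Rh (k2 - i) i * place2 (k2+1) Rh :=
            place2_comm_dchain (by omega) (by omega)
          rw [e1]
          simp only [mul_assoc]
          rw [← hcomC, ybW k2 rfl, ← mul_assoc Ek, P.commR k2 (by omega)]
          simp only [smul_mul_assoc, mul_assoc, mul_smul_comm]
          rfl
        calc (Ek * ((q ^ (i+1+1) * q⁻¹ ^ (k2+1+1)) •
              dchain m Rh (k2 + 1 + 1 - (i+1+1)) (i+1+1))) * place2 (k2+1+1-1) Rh
            = (q ^ (i+1+1) * q⁻¹ ^ (k2+1+1)) •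
                ((Ek * dchain m Rh (k2 - i) (i+2)) * place2 (k2+1) Rh) := by
              rw [mul_smul_comm, smul_mul_assoc,
                show k2 + 1 + 1 - (i+1+1) = k2 - i from by omega,
                show k2 + 1 + 1 - 1 = k2 + 1 from by omega]
          _ = (q ^ (i+1+1) * q⁻¹ ^ (k2+1+1)) • (q • (Ek * dchain m Rh (k2 - i) (i+2))) := by
              rw [core]
          _ = q • (Ek * ((q ^ (i+1+1) * q⁻¹ ^ (k2+1+1)) •
                dchain m Rh (k2 + 1 + 1 - (i+1+1)) (i+1+1))) := by
              rw [smul_comm, mul_smul_comm,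
                show k2 + 1 + 1 - (i+1+1) = k2 - i from by omega]
      · have hu1 : Ek * ((q ^ (0+1) * q⁻¹ ^ (k1+1)) • dchain m Rh (k1 + 1 - (0+1)) (0+1))
            = (q ^ 1 * q⁻¹ ^ (k1+1)) • (Ek * place2 k1 Rh) := by
          rw [mul_smul_comm]
          congr 2
          rw [dchain_succ, dchain_zero, mul_one,
            show k1 + 1 - (0+1) + 0 = k1 from by omega]
        have hu0 : Ek * ((q ^ 0 * q⁻¹ ^ (k1+1)) • dchain m Rh (k1 + 1 - 0) 0)
            = (q ^ 0 * q⁻¹ ^ (k1+1)) • Ek := by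
          rw [dchain_zero, mul_smul_comm, mul_one]
        rw [hu1, hu0]
        have hPP : (Ek * place2 k1 Rh) * place2 k1 Rh =
            Ek + (q - q⁻¹) • (Ek * place2 k1 Rh) := by
          rw [mul_assoc, heckeM hHecke (show k1 + 1 < m by omega), mul_add, mul_one,
            mul_smul_comm]
        rw [smul_mul_assoc, smul_mul_assoc, hPP]
        match_scalars <;> field_simp <;> ring
    apply smul_cancel_left hqn1
    calc qnum q (k1+2) • (E2 * place2 k1 Rh)
        = (qnum q (k1+2) • E2) * place2 k1 Rh := (smul_mul_assoc _ _ _).symm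
      _ = (Ek * ∑ i ∈ Finset.range (k1+2),
            (q ^ i * q⁻¹ ^ (k1+1)) • dchain m Rh (k1 + 1 - i) i) * place2 k1 Rh := by
          rw [heR]
      _ = ∑ i ∈ Finset.range (k1+2),
            (Ek * ((q ^ i * q⁻¹ ^ (k1+1)) • dchain m Rh (k1 + 1 - i) i)) * place2 k1 Rh := by
          rw [Finset.mul_sum, Finset.sum_mul]
      _ = ∑ i ∈ Finset.range (k1+2),
            q • (Ek * ((q ^ i * q⁻¹ ^ (k1+1)) • dchain m Rh (k1 + 1 - i) i)) := hkey
      _ = q • (Ek * ∑ i ∈ Finset.range (k1+2),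
            (q ^ i * q⁻¹ ^ (k1+1)) • dchain m Rh (k1 + 1 - i) i) := by
          rw [Finset.mul_sum, ← Finset.smul_sum]
      _ = q • (qnum q (k1+2) • E2) := by rw [heR]
      _ = qnum q (k1+2) • (q • E2) := smul_comm _ _ _
  -- absorption at level k1+2
  have habsL2 : Ek * E2 = E2 := by
    rw [hrec, mul_smul_comm, ← mul_assoc, ← mul_assoc, hidem, ← hrec]
  have habsR2 : E2 * Ek = E2 := by
    rw [hrec, smul_mul_assoc, mul_assoc (Ek * X) Ek Ek, hidem, ← hrec]
  have hE2X : E2 * X = qnum q (k1+2) • E2 := by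
    rw [hXd, mul_add, mul_smul_comm, mul_one, mul_smul_comm, hcommRtop, smul_smul,
      ← add_smul, mul_comm (qnum q (k1+1)) q, qnum_succ hq hd (k1+1)]
  have hidem2 : E2 * E2 = E2 := by
    nth_rewrite 2 [hrec]
    rw [mul_smul_comm, ← mul_assoc, ← mul_assoc, habsR2, hE2X, smul_mul_assoc, habsR2,
      smul_smul, inv_mul_cancel₀ hqn1, one_smul]
  refine ⟨hidem2, habsL2, habsR2, ?_, ?_, heL, heR⟩
  · intro i hi
    show place2 i Rh * E2 = q • E2
    by_cases hlow : i + 1 < k1 + 1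
    · rw [hrec, mul_smul_comm, ← mul_assoc, ← mul_assoc, P.commL i hlow, smul_mul_assoc,
        smul_mul_assoc, smul_comm ((qnum q (k1+2))⁻¹) q]
    · have hik : i = k1 := by omega
      rw [hik]
      exact hcommLtop
  · intro i hi
    show E2 * place2 i Rh = q • E2
    by_cases hlow : i + 1 < k1 + 1
    · rw [hrec, smul_mul_assoc, mul_assoc (Ek * X) Ek, P.commR i hlow, mul_smul_comm,
        smul_comm ((qnum q (k1+2))⁻¹) q]
    · have hik : i = k1 := by omega
      rw [hik]
      exact hcommRtop

end SPackSucc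

section ASide

variable {F : Type*} [Field F] {N : ℕ}

theorem spack_all {q : F} {Rh : RMat F N} {m : ℕ}
    (hq : q ≠ 0) (hd : q - q⁻¹ ≠ 0) (hqn : ∀ j : ℕ, 1 ≤ j → qnum q j ≠ 0)
    (hYB : YangBaxter Rh) (hHecke : Hecke q Rh) :
    ∀ k, 1 ≤ k → k ≤ m → SPack q Rh m k := by
  intro k
  induction k with
  | zero => intro h _; omega
  | succ n ih =>
      intro _ hle
      by_cases hn : n = 0
      · subst hn
        exact spack_one hd (by omega)
      · exact spack_succ hq hd hqn hYB hHecke (by omega) hle (ih (by omega) (by omega))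

variable {𝒜 : Type*} [Ring 𝒜] [Algebra F 𝒜]

theorem lift_mul {m : ℕ} (A B : TensM F N m) :
    lift 𝒜 (A * B) = lift 𝒜 A * lift 𝒜 B := by
  unfold lift
  exact Matrix.map_mul

theorem lift_one {m : ℕ} : lift 𝒜 (1 : TensM F N m) = 1 := by
  unfold lift
  exact Matrix.map_one _ (map_zero _) (map_one _)

theorem lift_smul {m : ℕ} (c : F) (A : TensM F N m) :
    lift 𝒜 (c • A) = c • lift 𝒜 A := by
  unfold lift
  ext a b
  rw [Matrix.map_apply, Matrix.smul_apply, Matrix.smul_apply, Matrix.map_apply,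
    smul_eq_mul, map_mul, ← Algebra.smul_def]

theorem lift_add {m : ℕ} (A B : TensM F N m) :
    lift 𝒜 (A + B) = lift 𝒜 A + lift 𝒜 B := by
  unfold lift
  ext a b
  simp [Matrix.map_apply]

theorem trace_lift_comm {m : ℕ} (A : TensM F N m) (Y : TensM 𝒜 N m) :
    Matrix.trace (Y * lift 𝒜 A) = Matrix.trace (lift 𝒜 A * Y) :=
  trace_mul_comm_central Y (lift 𝒜 A) (fun p r c => Algebra.commutes _ _)

theorem lift_pg {m i k : ℕ} (A : TensM F N k) :
    lift 𝒜 (pg m i A) = pg m i (lift 𝒜 A) := by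
  unfold lift
  exact (pg_map m i _ (map_zero _) A).symm

/-- `place1` at leg `i` as a generic placement. -/
theorem place1_eq_pg {R : Type*} [Zero R] {m i : ℕ} (h : i < m)
    (T : Matrix (Fin N) (Fin N) R) :
    (place1 i T : TensM R N m) = pg m i (place1 0 T : TensM R N 1) := by
  rw [pg_place1 (by omega) (by omega), Nat.add_zero]

/-- `T_i T_{i+1} = (T₁T₂)` placed at legs `i, i+1`. -/
theorem place1_mul_place1 {m i : ℕ} (h : i + 1 < m) (T : Matrix (Fin N) (Fin N) 𝒜) :
    (place1 i T : TensM 𝒜 N m) * place1 (i + 1) T = place2 i (TT T) := by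
  rw [place1_eq_pg (show i < m from by omega) T, place1_eq_pg (show i + 1 < m from h) T,
    pg_mul_pg_disjoint (by omega) (by omega)]
  ext a b
  simp only [place2, Matrix.of_apply, dif_pos (show i + 1 < m from h)]
  have hval : ∀ (c d : Fin m → Fin N) (t : ℕ) (ht : t < m),
      (place1 0 T : TensM 𝒜 N 1) (fun s => c ⟨t + s.val, by omega⟩)
        (fun s => d ⟨t + s.val, by omega⟩) = T (c ⟨t, ht⟩) (d ⟨t, ht⟩) := by
    intro c d t ht
    simp only [place1, Matrix.of_apply, dif_pos (show (0:ℕ) < 1 by omega)]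
    rw [if_pos]
    · congr 1 <;> congr 1 <;> simp [Fin.ext_iff]
    · intro s hs
      exact absurd (by omega : s.val = 0) hs
  rw [hval a b i (by omega), hval a b (i+1) (by omega)]
  have hcond : (∀ t : Fin m, (t.val < i ∨ i + 1 ≤ t.val) → (t.val < i + 1 ∨ i + 1 + 1 ≤ t.val) →
      a t = b t) ↔ (∀ t : Fin m, t.val ≠ i → t.val ≠ i + 1 → a t = b t) := by
    constructor
    · intro h' t h1 h2; exact h' t (by omega) (by omega)
    · intro h' t h1 h2; exact h' t (by omega) (by omega)
  split_ifs with h1 h2 h2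
  · rfl
  · exact absurd (hcond.1 h1) h2
  · exact absurd (hcond.2 h2) h1
  · rfl

/-- Transported RTT relation. -/
theorem rttM {Rh : RMat F N} {T : Matrix (Fin N) (Fin N) 𝒜}
    (hT : RTTrel 𝒜 Rh T) {m i : ℕ} (h : i + 1 < m) :
    lift 𝒜 (place2 i Rh : TensM F N m) * (place1 i T * place1 (i + 1) T) =
      (place1 i T * place1 (i + 1) T) * lift 𝒜 (place2 i Rh) := by
  have hl : lift 𝒜 (place2 i Rh : TensM F N m) =
      place2 i (Rh.map (algebraMap F 𝒜)) := by
    unfold lift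
    exact (place2_map i _ (map_zero _) Rh).symm
  rw [hl, place1_mul_place1 h, ← place2_mul h, ← place2_mul h, hT]

/-- Tprod with an offset. -/
def offTprod (m a : ℕ) (T : Matrix (Fin N) (Fin N) 𝒜) : ℕ → TensM 𝒜 N m
  | 0 => 1
  | k + 1 => offTprod m a T k * place1 (a + k) T

theorem pg_Tprod {m a b : ℕ} (T : Matrix (Fin N) (Fin N) 𝒜) (hab : a + b ≤ m) :
    ∀ k, k ≤ b → pg m a (Tprod b T k) = offTprod m a T k := by
  intro k
  induction k with
  | zero =>
      intro _
      show pg m a (1 : TensM 𝒜 N b) = 1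
      exact pg_one (by omega)
  | succ n ih =>
      intro hn
      show pg m a (Tprod b T n * place1 n T) = offTprod m a T n * place1 (a + n) T
      rw [pg_mul (by omega), ih (by omega), pg_place1 (by omega) (by omega)]

theorem Tprod_eq_offTprod {m : ℕ} (T : Matrix (Fin N) (Fin N) 𝒜) :
    ∀ k, (Tprod m T k : TensM 𝒜 N m) = offTprod m 0 T k := by
  intro k
  induction k with
  | zero => rfl
  | succ n ih =>
      show Tprod m T n * place1 n T = offTprod m 0 T n * place1 (0 + n) T
      rw [ih, Nat.zero_add]

theorem offTprod_add {m a : ℕ} (T : Matrix (Fin N) (Fin N) 𝒜) (x : ℕ) :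
    ∀ y, offTprod m a T (x + y) = offTprod m a T x * offTprod m (a + x) T y := by
  intro y
  induction y with
  | zero => rw [Nat.add_zero]; exact (mul_one _).symm
  | succ n ih =>
      show offTprod m a T (x + n) * place1 (a + (x + n)) T = _
      rw [ih, show a + (x + n) = a + x + n from by omega, mul_assoc]
      rfl

theorem Tprod_split {m a b : ℕ} (T : Matrix (Fin N) (Fin N) 𝒜) (hab : a + b ≤ m) :
    (Tprod m T (a + b) : TensM 𝒜 N m) =
      pg m 0 (Tprod a T a) * pg m a (Tprod b T b) := by
  rw [Tprod_eq_offTprod, offTprod_add T a b, Nat.zero_add,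
    pg_Tprod T (by omega) a (le_refl a), pg_Tprod T hab b (le_refl b)]

theorem pg_rcf {Rh : RMat F N} {j m' s l off : ℕ} (h : s + l + 1 ≤ m')
    (hoff : off + m' ≤ j) :
    pg j off (rChainFrom m' Rh s l) = rChainFrom j Rh (off + s) l := by
  induction l with
  | zero =>
      show pg j off (1 : TensM F N m') = 1
      exact pg_one (by omega)
  | succ n ih =>
      show pg j off (rChainFrom m' Rh s n * place2 (s + n) Rh) = _
      rw [pg_mul (by omega), ih (by omega),
        pg_place2 (by omega) (show s + n + 1 < m' by omega),
        show off + (s + n) = off + s + n from by omega]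
      rfl

end ASide

section CommT

variable {F : Type*} [Field F] {N : ℕ} {𝒜 : Type*} [Ring 𝒜] [Algebra F 𝒜]

theorem pg0lift_comm_place1 {m k t : ℕ} (h : k ≤ t) (ht : t < m)
    (A : TensM F N k) (T : Matrix (Fin N) (Fin N) 𝒜) :
    pg m 0 (lift 𝒜 A) * place1 t T = place1 t T * pg m 0 (lift 𝒜 A) := by
  rw [place1_eq_pg ht T]
  exact pg_comm_of_entries_comm (by omega) (by omega) (lift 𝒜 A) _
    (fun x y u v => Algebra.commutes _ _)

theorem liftplace2_comm_pg0 {m k i : ℕ} (h : k ≤ i) (hi : i + 1 < m)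
    (Rh : RMat F N) (X : TensM 𝒜 N k) :
    lift 𝒜 (place2 i Rh : TensM F N m) * pg m 0 X = pg m 0 X * lift 𝒜 (place2 i Rh) := by
  have hB : lift 𝒜 (place2 i Rh : TensM F N m) =
      pg m i (lift 𝒜 (place2 0 Rh : TensM F N 2)) := by
    rw [place2_eq_pg hi, lift_pg]
  rw [hB]
  exact (pg_comm_of_entries_comm (by omega) (by omega) X _
    (fun x y u v => (Algebra.commutes _ _).symm)).symm

theorem esyms_comm_rcf {q : F} {Rh : RMat F N} {m k s l : ℕ} (h : k ≤ s)
    (h2 : s + l + 1 ≤ m) :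
    embed m (syms Rh q k) * rChainFrom m Rh s l =
      rChainFrom m Rh s l * embed m (syms Rh q k) := by
  rw [embed_eq_pg (show k ≤ m by omega)]
  induction l with
  | zero =>
      rw [rcf_zero, one_mul, mul_one]
  | succ n ih =>
      rw [rcf_succ, ← mul_assoc, ih (by omega), mul_assoc,
        pg0_comm_place2 (by omega) (by omega), ← mul_assoc]

theorem lift_esyms_comm_Tprod {q : F} {Rh : RMat F N} {T : Matrix (Fin N) (Fin N) 𝒜}
    (hT : RTTrel 𝒜 Rh T) {m : ℕ} :
    ∀ k, k ≤ m → lift 𝒜 (embed m (syms Rh q k)) * Tprod m T k =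
      Tprod m T k * lift 𝒜 (embed m (syms Rh q k)) := by
  have hmulcomm : ∀ (U V Z : TensM 𝒜 N m), U * Z = Z * U → V * Z = Z * V →
      (U * V) * Z = Z * (U * V) := by
    intro U V Z hU hV
    rw [mul_assoc, hV, ← mul_assoc, hU, mul_assoc]
  have hTpg : ∀ k' : ℕ, k' ≤ m → (Tprod m T k' : TensM 𝒜 N m) = pg m 0 (Tprod k' T k') := by
    intro k' hk'
    rw [Tprod_eq_offTprod, ← pg_Tprod T (by omega) k' (le_refl k')]
  intro k
  induction k with
  | zero =>
      intro _
      rw [embed_syms_zero, lift_one, one_mul]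
      exact (mul_one _).symm
  | succ n ih =>
      intro hn
      cases n with
      | zero =>
          rw [embed_syms_one (by omega), lift_one, one_mul, mul_one]
      | succ k' =>
          -- k = k' + 2
          have hrec := esyms_succ (q := q) (Rh := Rh) (m := m) (k := k' + 1) (by omega) hn
          have hPT : lift 𝒜 (place2 k' Rh : TensM F N m) * Tprod m T (k' + 2) =
              Tprod m T (k' + 2) * lift 𝒜 (place2 k' Rh) := by
            have e1 : (Tprod m T (k' + 2) : TensM 𝒜 N m) =
                Tprod m T k' * (place1 k' T * place1 (k' + 1) T) := by
              show Tprod m T k' * place1 k' T * place1 (k' + 1) T = _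
              rw [mul_assoc]
            rw [e1, hTpg k' (by omega)]
            have h1 := liftplace2_comm_pg0 (m := m) (le_refl k') (by omega) Rh (Tprod k' T k')
            have h2 := rttM hT (show k' + 1 < m by omega)
            rw [← mul_assoc, h1, mul_assoc, h2, ← mul_assoc]
          have hA : lift 𝒜 (embed m (syms Rh q (k' + 1))) * Tprod m T (k' + 2) =
              Tprod m T (k' + 2) * lift 𝒜 (embed m (syms Rh q (k' + 1))) := by
            have e1 : (Tprod m T (k' + 2) : TensM 𝒜 N m) =
                Tprod m T (k' + 1) * place1 (k' + 1) T := rfl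
            rw [e1, ← mul_assoc, ih (by omega), mul_assoc, mul_assoc]
            congr 1
            rw [embed_eq_pg (show k' + 1 ≤ m by omega), lift_pg]
            exact pg0lift_comm_place1 (le_refl (k' + 1)) (by omega) _ T
          rw [hrec, lift_smul, lift_mul, lift_mul, smul_mul_assoc, mul_smul_comm]
          congr 1
          apply hmulcomm
          · apply hmulcomm
            · exact hA
            · rw [lift_add, lift_smul, lift_smul, lift_one]
              rw [add_mul, mul_add, smul_mul_assoc, one_mul, mul_smul_comm, mul_one,
                smul_mul_assoc, mul_smul_comm]
              congr 1
              rw [show k' + 1 - 1 = k' from rfl]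
              rw [hPT]
          · exact hA

theorem lift_esyms_comm_offTprod {q : F} {Rh : RMat F N} {T : Matrix (Fin N) (Fin N) 𝒜}
    {m k a : ℕ} (hka : k ≤ a) (hm : k ≤ m) :
    ∀ y, a + y ≤ m → lift 𝒜 (embed m (syms Rh q k)) * offTprod m a T y =
      offTprod m a T y * lift 𝒜 (embed m (syms Rh q k)) := by
  intro y
  induction y with
  | zero =>
      intro _
      show _ * 1 = 1 * _
      rw [mul_one, one_mul]
  | succ n ih =>
      intro hy
      show lift 𝒜 (embed m (syms Rh q k)) * (offTprod m a T n * place1 (a + n) T) = _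
      rw [← mul_assoc, ih (by omega), mul_assoc, embed_eq_pg hm, lift_pg,
        pg0lift_comm_place1 (by omega) (by omega) _ T, ← mul_assoc]
      rfl

theorem lift_esyms_comm_Tprod_full {q : F} {Rh : RMat F N} {T : Matrix (Fin N) (Fin N) 𝒜}
    (hT : RTTrel 𝒜 Rh T) {m k kk : ℕ} (hk : k ≤ kk) (hkk : kk ≤ m) :
    lift 𝒜 (embed m (syms Rh q k)) * Tprod m T kk =
      Tprod m T kk * lift 𝒜 (embed m (syms Rh q k)) := by
  have e1 : (Tprod m T kk : TensM 𝒜 N m) = Tprod m T k * offTprod m k T (kk - k) := by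
    rw [Tprod_eq_offTprod, Tprod_eq_offTprod, show kk = k + (kk - k) from by omega,
      offTprod_add, Nat.zero_add, show k + (kk - k) - k = kk - k from by omega]
  rw [e1, ← mul_assoc, lift_esyms_comm_Tprod hT k (by omega), mul_assoc,
    lift_esyms_comm_offTprod (le_refl k) (by omega) (kk - k) (by omega), ← mul_assoc]

end CommT

section Final

variable {F : Type*} [Field F] {N : ℕ}

theorem embed_self {R : Type*} [Zero R] {m : ℕ} (M : TensM R N m) : embed m M = M := by
  ext a b
  simp only [embed, Matrix.of_apply, dif_pos (le_refl m)]
  rw [if_pos (fun t ht => absurd t.isLt (by omega))]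

theorem trace_pg_mul_pg' {R : Type*} [NonAssocSemiring R] {m k l : ℕ} (hm : m = k + l)
    (A : TensM R N k) (B : TensM R N l) :
    Matrix.trace (pg m 0 A * pg m k B) = Matrix.trace A * Matrix.trace B := by
  subst hm
  exact trace_pg_mul_pg A B

end Final

section TraceRec

variable {F : Type*} [Field F] {N : ℕ}

/-- `G_u = Tr(S^{(u+1)} R̂_{u+1} ⋯ R̂_{j-1} T₁⋯T_j)` (0-based chain start `u`). -/
noncomputable def Gfun (𝒜 : Type*) [Ring 𝒜] [Algebra F 𝒜] (q : F) (Rh : RMat F N)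
    (T : Matrix (Fin N) (Fin N) 𝒜) (j u : ℕ) : 𝒜 :=
  Matrix.trace (lift 𝒜 (embed j (syms Rh q (u + 1))) *
    lift 𝒜 (rChainFrom j Rh u (j - u - 1)) * Tprod j T j)

/-- `H_u = Tr(S^{(u)} R̂_{u+1} ⋯ R̂_{j-1} T₁⋯T_j)`. -/
noncomputable def Hfun (𝒜 : Type*) [Ring 𝒜] [Algebra F 𝒜] (q : F) (Rh : RMat F N)
    (T : Matrix (Fin N) (Fin N) 𝒜) (j u : ℕ) : 𝒜 :=
  Matrix.trace (lift 𝒜 (embed j (syms Rh q u)) *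
    lift 𝒜 (rChainFrom j Rh u (j - u - 1)) * Tprod j T j)

variable {𝒜 : Type*} [Ring 𝒜] [Algebra F 𝒜]

set_option maxHeartbeats 2000000 in
theorem Grec {q : F} {Rh : RMat F N} {T : Matrix (Fin N) (Fin N) 𝒜}
    (hq : q ≠ 0) (hd : q - q⁻¹ ≠ 0) (hqnum : ∀ k : ℕ, 1 ≤ k → qnum q k ≠ 0)
    (hYB : YangBaxter Rh) (hHecke : Hecke q Rh) (hT : RTTrel 𝒜 Rh T)
    {j u : ℕ} (hu : 1 ≤ u) (huj : u + 1 ≤ j) :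
    qnum q (u + 1) • Gfun 𝒜 q Rh T j u =
      q⁻¹ ^ u • Hfun 𝒜 q Rh T j u + qnum q u • Gfun 𝒜 q Rh T j (u - 1) := by
  have hsp := spack_all (m := j) hq hd hqnum hYB hHecke u hu (by omega)
  have hFrec : qnum q (u + 1) • embed j (syms Rh q (u + 1)) =
      embed j (syms Rh q u) *
        (q⁻¹ ^ u • (1 : TensM F N j) + qnum q u • place2 (u - 1) Rh) *
        embed j (syms Rh q u) := by
    rw [esyms_succ hu huj, smul_smul, mul_inv_cancel₀ (hqnum (u + 1) (by omega)), one_smul]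
  have hAC : lift 𝒜 (embed j (syms Rh q u)) * lift 𝒜 (rChainFrom j Rh u (j - u - 1)) =
      lift 𝒜 (rChainFrom j Rh u (j - u - 1)) * lift 𝒜 (embed j (syms Rh q u)) := by
    rw [← lift_mul, esyms_comm_rcf (le_refl u) (by omega), lift_mul]
  have hATP : lift 𝒜 (embed j (syms Rh q u)) * Tprod j T j =
      Tprod j T j * lift 𝒜 (embed j (syms Rh q u)) :=
    lift_esyms_comm_Tprod_full hT (by omega) (le_refl j)
  have hAA : lift 𝒜 (embed j (syms Rh q u)) * lift 𝒜 (embed j (syms Rh q u)) =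
      lift 𝒜 (embed j (syms Rh q u)) := by
    rw [← lift_mul, hsp.idem]
  have key : ∀ Y : TensM 𝒜 N j,
      Matrix.trace (lift 𝒜 (embed j (syms Rh q u)) * Y * lift 𝒜 (embed j (syms Rh q u)) *
        lift 𝒜 (rChainFrom j Rh u (j - u - 1)) * Tprod j T j) =
      Matrix.trace (lift 𝒜 (embed j (syms Rh q u)) * Y *
        (lift 𝒜 (rChainFrom j Rh u (j - u - 1)) * Tprod j T j)) := by
    intro Y
    calc Matrix.trace (lift 𝒜 (embed j (syms Rh q u)) * Y * lift 𝒜 (embed j (syms Rh q u)) *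
            lift 𝒜 (rChainFrom j Rh u (j - u - 1)) * Tprod j T j)
        = Matrix.trace (lift 𝒜 (embed j (syms Rh q u)) * Y *
            (lift 𝒜 (rChainFrom j Rh u (j - u - 1)) * Tprod j T j) *
            lift 𝒜 (embed j (syms Rh q u))) := by
          rw [mul_assoc (lift 𝒜 (embed j (syms Rh q u)) * Y) (lift 𝒜 (embed j (syms Rh q u)))
            (lift 𝒜 (rChainFrom j Rh u (j - u - 1))), hAC,
            ← mul_assoc (lift 𝒜 (embed j (syms Rh q u)) * Y)
              (lift 𝒜 (rChainFrom j Rh u (j - u - 1))) (lift 𝒜 (embed j (syms Rh q u))),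
            mul_assoc (lift 𝒜 (embed j (syms Rh q u)) * Y *
              lift 𝒜 (rChainFrom j Rh u (j - u - 1))) (lift 𝒜 (embed j (syms Rh q u)))
              (Tprod j T j), hATP,
            ← mul_assoc (lift 𝒜 (embed j (syms Rh q u)) * Y *
              lift 𝒜 (rChainFrom j Rh u (j - u - 1))) (Tprod j T j)
              (lift 𝒜 (embed j (syms Rh q u))),
            mul_assoc (lift 𝒜 (embed j (syms Rh q u)) * Y)
              (lift 𝒜 (rChainFrom j Rh u (j - u - 1))) (Tprod j T j)]
      _ = Matrix.trace (lift 𝒜 (embed j (syms Rh q u)) * (lift 𝒜 (embed j (syms Rh q u)) * Y *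
            (lift 𝒜 (rChainFrom j Rh u (j - u - 1))* Tprod j T j))) := by
          rw [trace_lift_comm]
      _ = Matrix.trace (lift 𝒜 (embed j (syms Rh q u)) * Y *
            (lift 𝒜 (rChainFrom j Rh u (j - u - 1)) * Tprod j T j)) := by
          rw [← mul_assoc, ← mul_assoc (lift 𝒜 (embed j (syms Rh q u)))
            (lift 𝒜 (embed j (syms Rh q u))) Y, hAA]
  have hchain : (place2 (u - 1) Rh : TensM F N j) * rChainFrom j Rh u (j - u - 1) =
      rChainFrom j Rh (u - 1) ((j - u - 1) + 1) := by
    rw [rcf_cons, show u - 1 + 1 = u from by omega]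
  calc qnum q (u + 1) • Gfun 𝒜 q Rh T j u
      = Matrix.trace ((qnum q (u + 1) • lift 𝒜 (embed j (syms Rh q (u + 1)))) *
          lift 𝒜 (rChainFrom j Rh u (j - u - 1)) * Tprod j T j) := by
        unfold Gfun
        rw [← Matrix.trace_smul, smul_mul_assoc, smul_mul_assoc]
    _ = Matrix.trace (lift 𝒜 (embed j (syms Rh q u)) *
          lift 𝒜 (q⁻¹ ^ u • (1 : TensM F N j) + qnum q u • place2 (u - 1) Rh) *
          lift 𝒜 (embed j (syms Rh q u)) *
          lift 𝒜 (rChainFrom j Rh u (j - u - 1)) * Tprod j T j) := by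
        rw [← lift_smul, hFrec, lift_mul, lift_mul]
    _ = Matrix.trace (lift 𝒜 (embed j (syms Rh q u)) *
          lift 𝒜 (q⁻¹ ^ u • (1 : TensM F N j) + qnum q u • place2 (u - 1) Rh) *
          (lift 𝒜 (rChainFrom j Rh u (j - u - 1)) * Tprod j T j)) :=
        key _
    _ = q⁻¹ ^ u • Hfun 𝒜 q Rh T j u + qnum q u • Gfun 𝒜 q Rh T j (u - 1) := by
        rw [lift_add, lift_smul, lift_smul, lift_one, mul_add, mul_smul_comm, mul_one,
          mul_smul_comm, add_mul, smul_mul_assoc, smul_mul_assoc, Matrix.trace_add,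
          Matrix.trace_smul, Matrix.trace_smul]
        congr 1
        · unfold Hfun
          rw [mul_assoc]
        · unfold Gfun
          rw [show u - 1 + 1 = u from by omega,
            show j - (u - 1) - 1 = (j - u - 1) + 1 from by omega]
          congr 1
          rw [← hchain, lift_mul, mul_assoc, ← mul_assoc (lift 𝒜 (place2 (u - 1) Rh)),
            ← mul_assoc, ← mul_assoc]
end TraceRec

section FinalMain

variable {F : Type*} [Field F] {N : ℕ} {𝒜 : Type*} [Ring 𝒜] [Algebra F 𝒜]

set_option maxHeartbeats 1000000 in
theorem Hfact {q : F} {Rh : RMat F N} {T : Matrix (Fin N) (Fin N) 𝒜}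
    {j u : ℕ} (huj : u + 1 ≤ j) :
    Hfun 𝒜 q Rh T j u =
      Matrix.trace (lift 𝒜 (syms Rh q u) * Tprod u T u) * psum 𝒜 Rh T (j - u) := by
  unfold Hfun
  have hS : lift 𝒜 (embed j (syms Rh q u)) = pg j 0 (lift 𝒜 (syms Rh q u)) := by
    rw [embed_eq_pg (show u ≤ j by omega), lift_pg]
  have hCpg : rChainFrom j Rh u (j - u - 1) =
      pg j u (rChainFrom (j - u) Rh 0 (j - u - 1)) := by
    rw [pg_rcf (show 0 + (j - u - 1) + 1 ≤ j - u from by omega)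
      (show u + (j - u) ≤ j from by omega), Nat.add_zero]
  have hC : lift 𝒜 (rChainFrom j Rh u (j - u - 1)) =
      pg j u (lift 𝒜 (rChainFrom (j - u) Rh 0 (j - u - 1))) := by
    rw [hCpg, lift_pg]
  have hT1 : (Tprod j T j : TensM 𝒜 N j) =
      pg j 0 (Tprod u T u) * pg j u (Tprod (j - u) T (j - u)) := by
    have h := Tprod_split (m := j) (a := u) (b := j - u) T (by omega)
    rwa [show u + (j - u) = j from by omega] at h
  have hswap : pg j u (lift 𝒜 (rChainFrom (j - u) Rh 0 (j - u - 1))) * pg j 0 (Tprod u T u) =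
      pg j 0 (Tprod u T u) * pg j u (lift 𝒜 (rChainFrom (j - u) Rh 0 (j - u - 1))) :=
    (pg_comm_of_entries_comm (show 0 + u ≤ u by omega) (show u + (j - u) ≤ j by omega)
      (Tprod u T u) _ (fun x y w v => (Algebra.commutes _ _).symm)).symm
  rw [hS, hC, hT1]
  rw [mul_assoc (pg j 0 (lift 𝒜 (syms Rh q u)))
      (pg j u (lift 𝒜 (rChainFrom (j - u) Rh 0 (j - u - 1)))) _,
    ← mul_assoc (pg j u (lift 𝒜 (rChainFrom (j - u) Rh 0 (j - u - 1))))
      (pg j 0 (Tprod u T u)) _,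
    hswap,
    mul_assoc (pg j 0 (Tprod u T u))
      (pg j u (lift 𝒜 (rChainFrom (j - u) Rh 0 (j - u - 1)))) _,
    ← mul_assoc (pg j 0 (lift 𝒜 (syms Rh q u))) (pg j 0 (Tprod u T u)) _,
    ← pg_mul (show 0 + u ≤ j by omega), ← pg_mul (show u + (j - u) ≤ j by omega),
    trace_pg_mul_pg' (show j = u + (j - u) from by omega)]
  rfl

theorem Gbase {q : F} {Rh : RMat F N} {T : Matrix (Fin N) (Fin N) 𝒜} {j : ℕ}
    (hj : 1 ≤ j) : Gfun 𝒜 q Rh T j 0 = psum 𝒜 Rh T j := by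
  unfold Gfun
  rw [embed_syms_one (by omega), lift_one, one_mul, Nat.sub_zero]
  rfl

theorem Gtop {q : F} {Rh : RMat F N} {T : Matrix (Fin N) (Fin N) 𝒜} {j : ℕ}
    (hj : 1 ≤ j) :
    Gfun 𝒜 q Rh T j (j - 1) = Matrix.trace (lift 𝒜 (syms Rh q j) * Tprod j T j) := by
  unfold Gfun
  rw [show j - 1 + 1 = j from by omega, show j - (j - 1) - 1 = 0 from by omega,
    rcf_zero, lift_one, mul_one, embed_self]

end FinalMain

theorem newton_identities_symmetric {F : Type*} [Field F] {N : ℕ} (hN : 1 ≤ N) (q : F) (hq : q ≠ 0)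
    (hqnum : ∀ k : ℕ, 1 ≤ k → qnum q k ≠ 0)
    (Rh : RMat F N) (hRinv : IsUnit Rh.det)
    (hYB : YangBaxter Rh) (hHecke : Hecke q Rh)
    {𝒜 : Type*} [Ring 𝒜] [Algebra F 𝒜]
    (T : Matrix (Fin N) (Fin N) 𝒜) (hT : RTTrel 𝒜 Rh T)
    (j : ℕ) (hj : 1 ≤ j) :
    (q ^ j * qnum q j) • tauT 𝒜 Rh q T j =
      (∑ k ∈ Finset.Icc 1 (j - 1), tauT 𝒜 Rh q T (j - k) * psum 𝒜 Rh T k) +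
        psum 𝒜 Rh T j := by
  have hd : q - q⁻¹ ≠ 0 := by
    intro h
    apply hqnum 1 le_rfl
    unfold qnum
    rw [h, div_zero]
  have htel : ∀ u, u + 1 ≤ j → qnum q (u + 1) • Gfun 𝒜 q Rh T j u =
      (∑ v ∈ Finset.range u, tauT 𝒜 Rh q T (v + 1) * psum 𝒜 Rh T (j - (v + 1))) +
        psum 𝒜 Rh T j := by
    intro u
    induction u with
    | zero =>
        intro h
        rw [Gbase (by omega), qnum_one hd, one_smul, Finset.sum_range_zero, zero_add]
    | succ v ih =>
        intro h
        rw [Grec hq hd hqnum hYB hHecke hT (by omega) h]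
        simp only [Nat.add_sub_cancel]
        rw [ih (by omega),
          Finset.sum_range_succ]
        have hHt : q⁻¹ ^ (v + 1) • Hfun 𝒜 q Rh T j (v + 1) =
            tauT 𝒜 Rh q T (v + 1) * psum 𝒜 Rh T (j - (v + 1)) := by
          rw [Hfact (by omega), ← smul_mul_assoc]
          rfl
        rw [hHt]
        abel
  have h1 := htel (j - 1) (by omega)
  rw [show j - 1 + 1 = j from by omega, Gtop hj] at h1
  have hL : (q ^ j * qnum q j) • tauT 𝒜 Rh q T j =
      qnum q j • Matrix.trace (lift 𝒜 (syms Rh q j) * Tprod j T j) := by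
    show (q ^ j * qnum q j) • (q⁻¹ ^ j • Matrix.trace (lift 𝒜 (syms Rh q j) * Tprod j T j)) = _
    rw [smul_smul, mul_comm (q ^ j) (qnum q j), mul_assoc, ← mul_pow,
      mul_inv_cancel₀ hq, one_pow, mul_one]
  rw [hL, h1]
  congr 1
  refine Finset.sum_nbij' (fun v => j - (v + 1)) (fun k => j - k - 1) ?_ ?_ ?_ ?_ ?_
  · intro v hv
    simp only [Finset.mem_range] at hv
    simp only [Finset.mem_Icc]
    omega
  · intro k hk
    simp only [Finset.mem_Icc] at hk
    simp only [Finset.mem_range]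
    omega
  · intro v hv
    simp only [Finset.mem_range] at hv
    show j - (j - (v + 1)) - 1 = v
    omega
  · intro k hk
    simp only [Finset.mem_Icc] at hk
    show j - (j - k - 1 + 1) = k
    omega
  · intro v hv
    simp only [Finset.mem_range] at hv
    show tauT 𝒜 Rh q T (v + 1) * psum 𝒜 Rh T (j - (v + 1)) =
      tauT 𝒜 Rh q T (j - (j - (v + 1))) * psum 𝒜 Rh T (j - (v + 1))
    rw [show j - (j - (v + 1)) = v + 1 from by omega]
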